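/- arXiv:2310.05310 — 6 statements merged into one kernel-verified Lean document; each statement's English description precedes it below -/
import Mathlib

section
/- Let a0, c, mu0, mu1 > 0 and b, σ, B, ω ∈ ℝ, and let f, g : ℝ → ℝ be smooth. Define u : ℝ × ℝ → ℂ by u(x,t) = e^{iωt}·e^{iB(x−σt)}·f(x−σt) and v : ℝ × ℝ → ℝ by v(x,t) = g(x−σt). Then (u,v) satisfies the Schrödinger KdV–KdV system at every point (x,t) ∈ ℝ² if and only if (f,g) satisfies the Schrödinger KdV–KdV associated ODE system with parameters a0, c, mu0, mu1, b, wave speed σ, and phase shifts B, ω. -/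
open Complex

noncomputable def EE (B : ℝ) : ℝ → ℂ := fun y => Complex.exp (Complex.I * (B:ℂ) * (y:ℂ))
noncomputable def PP1 (B : ℝ) (f : ℝ → ℝ) : ℝ → ℂ :=
  fun y => Complex.I * (B:ℂ) * ((f y : ℝ):ℂ) + ((deriv f y : ℝ):ℂ)
noncomputable def PP2 (B : ℝ) (f : ℝ → ℝ) : ℝ → ℂ :=
  fun y => Complex.I * (B:ℂ) * PP1 B f y + PP1 B (deriv f) y
noncomputable def PP3 (B : ℝ) (f : ℝ → ℝ) : ℝ → ℂ :=
  fun y => Complex.I * (B:ℂ) * PP2 B f y + PP2 B (deriv f) y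

lemma aux_exp_mul (B : ℝ) {h : ℝ → ℂ} {h' : ℂ} {y : ℝ} (hh : HasDerivAt h h' y) :
    HasDerivAt (fun y : ℝ => Complex.exp (Complex.I * (B:ℂ) * (y:ℂ)) * h y)
      (Complex.exp (Complex.I * (B:ℂ) * (y:ℂ)) * (Complex.I * (B:ℂ) * h y + h')) y := by
  have h1 : HasDerivAt (fun y : ℝ => Complex.I * (B:ℂ) * (y:ℂ)) (Complex.I * B) y := by
    simpa using (Complex.ofRealCLM.hasDerivAt (x := y)).const_mul (Complex.I * (B:ℂ))
  have := h1.cexp.fun_mul hh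
  exact this.congr_deriv (by ring)

lemma aux_shift (C : ℂ) {G : ℝ → ℂ} {G' : ℂ} {s x : ℝ} (hG : HasDerivAt G G' (x - s)) :
    HasDerivAt (fun x' : ℝ => C * G (x' - s)) (C * G') x := by
  have h1 : HasDerivAt (fun x' : ℝ => x' - s) 1 x := (hasDerivAt_id x).sub_const s
  have h2 : HasDerivAt (fun x' : ℝ => G (x' - s)) ((1:ℝ) • G') x := hG.scomp x h1
  simpa using h2.const_mul C

lemma aux_shiftR {G : ℝ → ℝ} {G' : ℝ} {s x : ℝ} (hG : HasDerivAt G G' (x - s)) :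
    HasDerivAt (fun x' : ℝ => G (x' - s)) G' x := by
  have h1 : HasDerivAt (fun x' : ℝ => x' - s) 1 x := (hasDerivAt_id x).sub_const s
  simpa [Function.comp_def] using hG.comp x h1

lemma aux_negslope (x σ t : ℝ) : HasDerivAt (fun t' : ℝ => x - σ * t') (-σ) t := by
  simpa using ((hasDerivAt_id t).const_mul σ).const_sub x

lemma PP1_hasDeriv (B : ℝ) {f : ℝ → ℝ} (hf : Differentiable ℝ f)
    (hf1 : Differentiable ℝ (deriv f)) (y : ℝ) :
    HasDerivAt (PP1 B f) (PP1 B (deriv f) y) y := by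
  unfold PP1
  exact (((hf y).hasDerivAt.ofReal_comp).const_mul _).add ((hf1 y).hasDerivAt.ofReal_comp)

lemma PP2_hasDeriv (B : ℝ) {f : ℝ → ℝ} (hf : Differentiable ℝ f)
    (hf1 : Differentiable ℝ (deriv f)) (hf2 : Differentiable ℝ (deriv (deriv f))) (y : ℝ) :
    HasDerivAt (PP2 B f) (PP2 B (deriv f) y) y := by
  unfold PP2
  exact ((PP1_hasDeriv B hf hf1 y).const_mul _).add (PP1_hasDeriv B hf1 hf2 y)

lemma G0_hasDeriv (B : ℝ) {f : ℝ → ℝ} (hf : Differentiable ℝ f) (y : ℝ) :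
    HasDerivAt (fun y => EE B y * ((f y : ℝ):ℂ)) (EE B y * PP1 B f y) y :=
  aux_exp_mul B ((hf y).hasDerivAt.ofReal_comp)

lemma G1_hasDeriv (B : ℝ) {f : ℝ → ℝ} (hf : Differentiable ℝ f)
    (hf1 : Differentiable ℝ (deriv f)) (y : ℝ) :
    HasDerivAt (fun y => EE B y * PP1 B f y) (EE B y * PP2 B f y) y :=
  aux_exp_mul B (PP1_hasDeriv B hf hf1 y)

lemma G2_hasDeriv (B : ℝ) {f : ℝ → ℝ} (hf : Differentiable ℝ f)
    (hf1 : Differentiable ℝ (deriv f)) (hf2 : Differentiable ℝ (deriv (deriv f))) (y : ℝ) :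
    HasDerivAt (fun y => EE B y * PP2 B f y) (EE B y * PP3 B f y) y :=
  aux_exp_mul B (PP2_hasDeriv B hf hf1 hf2 y)

lemma GH_hasDeriv (B : ℝ) {f g : ℝ → ℝ} (hf : Differentiable ℝ f)
    (hg : Differentiable ℝ g) (y : ℝ) :
    HasDerivAt (fun y => EE B y * (((f y : ℝ):ℂ) * ((g y : ℝ):ℂ)))
      (EE B y * (Complex.I * (B:ℂ) * (((f y : ℝ):ℂ) * ((g y : ℝ):ℂ))
        + (((deriv f y : ℝ):ℂ) * ((g y : ℝ):ℂ) + ((f y : ℝ):ℂ) * ((deriv g y : ℝ):ℂ)))) y :=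
  aux_exp_mul B (((hf y).hasDerivAt.ofReal_comp).mul ((hg y).hasDerivAt.ofReal_comp))

lemma it2gen {E : Type*} [NormedAddCommGroup E] [NormedSpace ℝ E] (F : ℝ → E) :
    iteratedDeriv 2 F = deriv (deriv F) := by
  rw [iteratedDeriv_succ, iteratedDeriv_one]

lemma it3gen {E : Type*} [NormedAddCommGroup E] [NormedSpace ℝ E] (F : ℝ → E) :
    iteratedDeriv 3 F = deriv (deriv (deriv F)) := by
  rw [iteratedDeriv_succ, iteratedDeriv_succ, iteratedDeriv_one]

set_option maxHeartbeats 1000000 in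
lemma alg1 (a0 mu0 mu1 b σ B ω F0 F1 F2 F3 G0 G1 : ℝ) (z1 z2 : ℂ)
    (hz1 : z1 ≠ 0) (hz2 : z2 ≠ 0) :
    (z1 * (Complex.I * (ω:ℂ)) * (z2 * ((F0:ℝ):ℂ)) +
        z1 * ((-σ : ℝ) • (z2 * (Complex.I * (B:ℂ) * ((F0:ℝ):ℂ) + ((F1:ℝ):ℂ)))) +
        (mu0:ℂ) * (z1 * (z2 * (Complex.I * (B:ℂ) * ((F0:ℝ):ℂ) + ((F1:ℝ):ℂ)))) +
        (a0:ℂ) * (z1 * (z2 * (Complex.I * (B:ℂ) * (Complex.I * (B:ℂ) * (Complex.I * (B:ℂ) * ((F0:ℝ):ℂ) + ((F1:ℝ):ℂ)) + (Complex.I * (B:ℂ) * ((F1:ℝ):ℂ) + ((F2:ℝ):ℂ))) + (Complex.I * (B:ℂ) * (Complex.I * (B:ℂ) * ((F1:ℝ):ℂ) + ((F2:ℝ):ℂ)) + (Complex.I * (B:ℂ) * ((F2:ℝ):ℂ) + ((F3:ℝ):ℂ)))))) +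
        Complex.I * (b:ℂ) * (z1 * (z2 * (Complex.I * (B:ℂ) * (Complex.I * (B:ℂ) * ((F0:ℝ):ℂ) + ((F1:ℝ):ℂ)) + (Complex.I * (B:ℂ) * ((F1:ℝ):ℂ) + ((F2:ℝ):ℂ))))) =
      -(z1 * (z2 * (Complex.I * (B:ℂ) * (((F0:ℝ):ℂ) * ((G0:ℝ):ℂ)) + (((F1:ℝ):ℂ) * ((G0:ℝ):ℂ) + ((F0:ℝ):ℂ) * ((G1:ℝ):ℂ))))) -
        Complex.I * (mu1:ℂ) * (z1 * z2 * ((F0:ℝ):ℂ)) * ((G0:ℝ):ℂ))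
    ↔ ((F1*G0 + F0*G1 + a0*F3 + (mu0 - σ - 3*a0*B^2 - 2*b*B)*F1 = 0) ∧
       ((B + mu1)*F0*G0 + (3*a0*B + b)*F2 + (ω + B*mu0 - B*σ - a0*B^3 - b*B^2)*F0 = 0)) := by
  have e : (z1 * (Complex.I * (ω:ℂ)) * (z2 * ((F0:ℝ):ℂ)) +
        z1 * ((-σ : ℝ) • (z2 * (Complex.I * (B:ℂ) * ((F0:ℝ):ℂ) + ((F1:ℝ):ℂ)))) +
        (mu0:ℂ) * (z1 * (z2 * (Complex.I * (B:ℂ) * ((F0:ℝ):ℂ) + ((F1:ℝ):ℂ)))) +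
        (a0:ℂ) * (z1 * (z2 * (Complex.I * (B:ℂ) * (Complex.I * (B:ℂ) * (Complex.I * (B:ℂ) * ((F0:ℝ):ℂ) + ((F1:ℝ):ℂ)) + (Complex.I * (B:ℂ) * ((F1:ℝ):ℂ) + ((F2:ℝ):ℂ))) + (Complex.I * (B:ℂ) * (Complex.I * (B:ℂ) * ((F1:ℝ):ℂ) + ((F2:ℝ):ℂ)) + (Complex.I * (B:ℂ) * ((F2:ℝ):ℂ) + ((F3:ℝ):ℂ)))))) +
        Complex.I * (b:ℂ) * (z1 * (z2 * (Complex.I * (B:ℂ) * (Complex.I * (B:ℂ) * ((F0:ℝ):ℂ) + ((F1:ℝ):ℂ)) + (Complex.I * (B:ℂ) * ((F1:ℝ):ℂ) + ((F2:ℝ):ℂ)))))) -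
      (-(z1 * (z2 * (Complex.I * (B:ℂ) * (((F0:ℝ):ℂ) * ((G0:ℝ):ℂ)) + (((F1:ℝ):ℂ) * ((G0:ℝ):ℂ) + ((F0:ℝ):ℂ) * ((G1:ℝ):ℂ))))) -
        Complex.I * (mu1:ℂ) * (z1 * z2 * ((F0:ℝ):ℂ)) * ((G0:ℝ):ℂ))
      = z1 * z2 * ((((F1*G0 + F0*G1 + a0*F3 + (mu0 - σ - 3*a0*(B*B) - 2*b*B)*F1 : ℝ)):ℂ) + ((((B + mu1)*F0*G0 + (3*a0*B + b)*F2 + (ω + B*mu0 - B*σ - a0*(B*B*B) - b*(B*B))*F0 : ℝ)):ℂ) * Complex.I) := by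
    simp only [Complex.real_smul]
    push_cast
    apply Complex.ext <;>
      simp only [Complex.add_re, Complex.add_im, Complex.sub_re, Complex.sub_im,
        Complex.neg_re, Complex.neg_im, Complex.mul_re, Complex.mul_im,
        Complex.ofReal_re, Complex.ofReal_im, Complex.I_re, Complex.I_im,
        Complex.re_ofNat, Complex.im_ofNat] <;>
      ring
  rw [← sub_eq_zero, e, mul_eq_zero, mul_eq_zero]
  simp only [hz1, hz2, false_or]
  rw [Complex.ext_iff]
  simp only [Complex.add_re, Complex.add_im, Complex.mul_re, Complex.mul_im,
    Complex.ofReal_re, Complex.ofReal_im, Complex.I_re, Complex.I_im,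
    Complex.zero_re, Complex.zero_im, mul_zero, zero_mul, mul_one, sub_zero,
    add_zero, zero_add]
  constructor <;> rintro ⟨h1, h2⟩ <;>
    exact ⟨by linear_combination h1, by linear_combination h2⟩

lemma alg2 (c σ F0 F1 G0 G1 G3 : ℝ) :
    (G1 * -σ + G1 + G0 * G1 + c * G3 = -(1/2) * (2 * F0 * F1))
    ↔ (F0 * F1 + G0 * G1 + c * G3 + (1 - σ) * G1 = 0) := by
  constructor <;> intro h <;> linarith

lemma key_point
    (a0 c mu0 mu1 b σ B ω : ℝ)
    (f g : ℝ → ℝ) (hf : ContDiff ℝ (⊤ : ℕ∞) f) (hg : ContDiff ℝ (⊤ : ℕ∞) g)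
    (u : ℝ → ℝ → ℂ) (v : ℝ → ℝ → ℝ)
    (hu : ∀ x t : ℝ, u x t
      = Complex.exp (Complex.I * (ω:ℂ) * (t:ℂ))
        * Complex.exp (Complex.I * (B:ℂ) * ((x:ℂ) - (σ:ℂ) * (t:ℂ)))
        * ((f (x - σ*t) : ℝ) : ℂ))
    (hv : ∀ x t : ℝ, v x t = g (x - σ*t))
    (x t : ℝ) :
    ((deriv (fun t' => u x t') t + (mu0:ℂ) * deriv (fun x' => u x' t) x
        + (a0:ℂ) * iteratedDeriv 3 (fun x' => u x' t) x
        + Complex.I * (b:ℂ) * iteratedDeriv 2 (fun x' => u x' t) x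
        = -(deriv (fun x' => u x' t * ((v x' t : ℝ) : ℂ)) x)
          - Complex.I * (mu1:ℂ) * u x t * ((v x t : ℝ) : ℂ))
      ∧ (deriv (fun t' => v x t') t + deriv (fun x' => v x' t) x
          + v x t * deriv (fun x' => v x' t) x
          + c * iteratedDeriv 3 (fun x' => v x' t) x
        = -(1/2 : ℝ) * deriv (fun x' => (‖u x' t‖)^2) x))
    ↔ ((deriv f (x - σ*t) * g (x - σ*t) + f (x - σ*t) * deriv g (x - σ*t)
          + a0 * deriv (deriv (deriv f)) (x - σ*t)
          + (mu0 - σ - 3*a0*B^2 - 2*b*B) * deriv f (x - σ*t) = 0) ∧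
        ((B + mu1) * f (x - σ*t) * g (x - σ*t) + (3*a0*B + b) * deriv (deriv f) (x - σ*t)
          + (ω + B*mu0 - B*σ - a0*B^3 - b*B^2) * f (x - σ*t) = 0) ∧
        (f (x - σ*t) * deriv f (x - σ*t) + g (x - σ*t) * deriv g (x - σ*t)
          + c * deriv (deriv (deriv g)) (x - σ*t) + (1 - σ) * deriv g (x - σ*t) = 0)) := by
  obtain ⟨hfd, hfc1⟩ := contDiff_infty_iff_deriv.mp
    (hf.of_le (by simp) : ContDiff ℝ ((⊤:ℕ∞) : WithTop ℕ∞) f)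
  obtain ⟨hf1d, hfc2⟩ := contDiff_infty_iff_deriv.mp hfc1
  obtain ⟨hf2d, _⟩ := contDiff_infty_iff_deriv.mp hfc2
  obtain ⟨hgd, hgc1⟩ := contDiff_infty_iff_deriv.mp
    (hg.of_le (by simp) : ContDiff ℝ ((⊤:ℕ∞) : WithTop ℕ∞) g)
  obtain ⟨hg1d, hgc2⟩ := contDiff_infty_iff_deriv.mp hgc1
  obtain ⟨hg2d, _⟩ := contDiff_infty_iff_deriv.mp hgc2
  -- function-level rewrites
  have hux : (fun x' => u x' t)
      = (fun x' => Complex.exp (Complex.I * (ω:ℂ) * (t:ℂ))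
          * (EE B (x' - σ*t) * ((f (x' - σ*t) : ℝ):ℂ))) := by
    funext x'; rw [hu]; simp only [EE]; push_cast; ring
  have du1 : deriv (fun x' => u x' t)
      = fun x'' => Complex.exp (Complex.I * (ω:ℂ) * (t:ℂ))
          * (EE B (x'' - σ*t) * PP1 B f (x'' - σ*t)) := by
    rw [hux]; funext x''
    exact (aux_shift _ (G0_hasDeriv B hfd (x'' - σ*t))).deriv
  have du2 : deriv (deriv (fun x' => u x' t))
      = fun x'' => Complex.exp (Complex.I * (ω:ℂ) * (t:ℂ))
          * (EE B (x'' - σ*t) * PP2 B f (x'' - σ*t)) := by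
    rw [du1]; funext x''
    exact (aux_shift _ (G1_hasDeriv B hfd hf1d (x'' - σ*t))).deriv
  have A3 : deriv (deriv (deriv (fun x' => u x' t))) x
      = Complex.exp (Complex.I * (ω:ℂ) * (t:ℂ)) * (EE B (x - σ*t) * PP3 B f (x - σ*t)) := by
    rw [du2]
    exact (aux_shift _ (G2_hasDeriv B hfd hf1d hf2d (x - σ*t))).deriv
  have A2 : deriv (deriv (fun x' => u x' t)) x
      = Complex.exp (Complex.I * (ω:ℂ) * (t:ℂ)) * (EE B (x - σ*t) * PP2 B f (x - σ*t)) := by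
    rw [du2]
  have A1 : deriv (fun x' => u x' t) x
      = Complex.exp (Complex.I * (ω:ℂ) * (t:ℂ)) * (EE B (x - σ*t) * PP1 B f (x - σ*t)) := by
    rw [du1]
  have At : deriv (fun t' => u x t') t
      = Complex.exp (Complex.I * (ω:ℂ) * (t:ℂ)) * (Complex.I * (ω:ℂ))
          * (EE B (x - σ*t) * ((f (x - σ*t) : ℝ):ℂ))
        + Complex.exp (Complex.I * (ω:ℂ) * (t:ℂ))
          * (((-σ : ℝ)) • (EE B (x - σ*t) * PP1 B f (x - σ*t))) := by
    have hut : (fun t' => u x t')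
        = fun t' : ℝ => Complex.exp (Complex.I * (ω:ℂ) * (t':ℂ))
            * (EE B ((x - σ*t' : ℝ)) * ((f ((x - σ*t' : ℝ)) : ℝ):ℂ)) := by
      funext t'; rw [hu]; simp only [EE]; push_cast; ring
    rw [hut]
    have hω1 : HasDerivAt (fun t' : ℝ => Complex.I * (ω:ℂ) * (t':ℂ)) (Complex.I * ω) t := by
      simpa using (Complex.ofRealCLM.hasDerivAt (x := t)).const_mul (Complex.I * (ω:ℂ))
    have hGc : HasDerivAt (fun t' : ℝ => EE B (x - σ*t') * ((f (x - σ*t') : ℝ):ℂ))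
        ((-σ : ℝ) • (EE B (x - σ*t) * PP1 B f (x - σ*t))) t :=
      by have := (G0_hasDeriv B hfd (x - σ*t)).scomp t (aux_negslope x σ t); exact this
    exact (hω1.cexp.mul hGc).deriv
  have Auv : deriv (fun x' => u x' t * ((v x' t : ℝ) : ℂ)) x
      = Complex.exp (Complex.I * (ω:ℂ) * (t:ℂ))
          * (EE B (x - σ*t) * (Complex.I * (B:ℂ)
              * (((f (x - σ*t) : ℝ):ℂ) * ((g (x - σ*t) : ℝ):ℂ))
            + (((deriv f (x - σ*t) : ℝ):ℂ) * ((g (x - σ*t) : ℝ):ℂ)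
              + ((f (x - σ*t) : ℝ):ℂ) * ((deriv g (x - σ*t) : ℝ):ℂ)))) := by
    have huv : (fun x' => u x' t * ((v x' t : ℝ) : ℂ))
        = fun x' => Complex.exp (Complex.I * (ω:ℂ) * (t:ℂ))
            * (EE B (x' - σ*t) * (((f (x' - σ*t) : ℝ):ℂ) * ((g (x' - σ*t) : ℝ):ℂ))) := by
      funext x'; rw [hu, hv]; simp only [EE]; push_cast; ring
    rw [huv]
    exact (aux_shift _ (GH_hasDeriv B hfd hgd (x - σ*t))).deriv
  -- v side
  have hvx : (fun x' => v x' t) = fun x' => g (x' - σ*t) := funext fun x' => hv x' t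
  have dv1 : deriv (fun x' => v x' t) = fun x'' => deriv g (x'' - σ*t) := by
    rw [hvx]; funext x''
    exact (aux_shiftR (hgd _).hasDerivAt).deriv
  have dv2 : deriv (deriv (fun x' => v x' t)) = fun x'' => deriv (deriv g) (x'' - σ*t) := by
    rw [dv1]; funext x''
    exact (aux_shiftR (hg1d _).hasDerivAt).deriv
  have C3 : deriv (deriv (deriv (fun x' => v x' t))) x = deriv (deriv (deriv g)) (x - σ*t) := by
    rw [dv2]
    exact (aux_shiftR (hg2d _).hasDerivAt).deriv
  have C1 : deriv (fun x' => v x' t) x = deriv g (x - σ*t) := by rw [dv1]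
  have Ct : deriv (fun t' => v x t') t = deriv g (x - σ*t) * (-σ) := by
    have : (fun t' => v x t') = fun t' => g (x - σ*t') := funext fun t' => hv x t'
    rw [this]
    exact ((hgd (x - σ*t)).hasDerivAt.comp t (aux_negslope x σ t)).deriv
  have Cabs : deriv (fun x' => (‖u x' t‖)^2) x = 2 * f (x - σ*t) * deriv f (x - σ*t) := by
    have habs : (fun x' => (‖u x' t‖)^2) = fun x' => (f (x' - σ*t))^2 := by
      funext x'; rw [hu]
      simp [Complex.norm_exp, Complex.norm_real, Complex.mul_re, Complex.I_re, Complex.I_im,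
        Complex.ofReal_re, Complex.ofReal_im, Complex.sub_re, Complex.sub_im, _root_.sq_abs,
        Real.exp_zero, mul_pow]
    rw [habs]
    have h2 : HasDerivAt (fun y => (f y)^2) (2 * f (x - σ*t) * deriv f (x - σ*t)) (x - σ*t) := by
      simpa [mul_comm, mul_assoc] using (hfd (x - σ*t)).hasDerivAt.fun_pow 2
    exact (aux_shiftR h2).deriv
  rw [it3gen, it2gen, it3gen, At, A1, A2, A3, Auv, C1, C3, Ct, Cabs, hu x t, hv x t]
  have hEE : EE B (x - σ*t) = Complex.exp (Complex.I * (B:ℂ) * ((x:ℂ) - (σ:ℂ) * (t:ℂ))) := by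
    simp [EE, Complex.ofReal_sub, Complex.ofReal_mul]
  rw [hEE]
  simp only [PP3, PP2, PP1]
  rw [alg1 a0 mu0 mu1 b σ B ω (f (x - σ*t)) (deriv f (x - σ*t)) (deriv (deriv f) (x - σ*t))
      (deriv (deriv (deriv f)) (x - σ*t)) (g (x - σ*t)) (deriv g (x - σ*t))
      _ _ (Complex.exp_ne_zero _) (Complex.exp_ne_zero _),
    alg2 c σ (f (x - σ*t)) (deriv f (x - σ*t)) (g (x - σ*t)) (deriv g (x - σ*t))
      (deriv (deriv (deriv g)) (x - σ*t))]
  tauto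

theorem stmt_0
    (a0 c mu0 mu1 b σ B ω : ℝ)
    (ha0 : 0 < a0) (hc : 0 < c) (hmu0 : 0 < mu0) (hmu1 : 0 < mu1)
    (f g : ℝ → ℝ) (hf : ContDiff ℝ (⊤ : ℕ∞) f) (hg : ContDiff ℝ (⊤ : ℕ∞) g)
    (u : ℝ → ℝ → ℂ) (v : ℝ → ℝ → ℝ)
    (hu : ∀ x t : ℝ, u x t
      = Complex.exp (Complex.I * (ω:ℂ) * (t:ℂ))
        * Complex.exp (Complex.I * (B:ℂ) * ((x:ℂ) - (σ:ℂ) * (t:ℂ)))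
        * ((f (x - σ*t) : ℝ) : ℂ))
    (hv : ∀ x t : ℝ, v x t = g (x - σ*t)) :
    (∀ x t : ℝ,
      (deriv (fun t' => u x t') t + (mu0:ℂ) * deriv (fun x' => u x' t) x
        + (a0:ℂ) * iteratedDeriv 3 (fun x' => u x' t) x
        + Complex.I * (b:ℂ) * iteratedDeriv 2 (fun x' => u x' t) x
        = -(deriv (fun x' => u x' t * ((v x' t : ℝ) : ℂ)) x)
          - Complex.I * (mu1:ℂ) * u x t * ((v x t : ℝ) : ℂ))
      ∧ (deriv (fun t' => v x t') t + deriv (fun x' => v x' t) x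
          + v x t * deriv (fun x' => v x' t) x
          + c * iteratedDeriv 3 (fun x' => v x' t) x
        = -(1/2 : ℝ) * deriv (fun x' => (‖u x' t‖)^2) x))
    ↔ (∀ ξ : ℝ,
      (deriv f ξ * g ξ + f ξ * deriv g ξ + a0 * iteratedDeriv 3 f ξ + (mu0 - σ - 3*a0*B^2 - 2*b*B) * deriv f ξ = 0) ∧
      ((B + mu1) * f ξ * g ξ + (3*a0*B + b) * iteratedDeriv 2 f ξ + (ω + B*mu0 - B*σ - a0*B^3 - b*B^2) * f ξ = 0) ∧
      (f ξ * deriv f ξ + g ξ * deriv g ξ + c * iteratedDeriv 3 g ξ + (1 - σ) * deriv g ξ = 0)) := by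
  have key := key_point a0 c mu0 mu1 b σ B ω f g hf hg u v hu hv
  constructor
  · intro h ξ
    have hk := (key ξ 0).mp (h ξ 0)
    simp only [mul_zero, sub_zero] at hk
    simpa only [it3gen, it2gen] using hk
  · intro h x t
    refine (key x t).mpr ?_
    have hx := h (x - σ*t)
    simpa only [it3gen, it2gen] using hx
end

section
/- Let a1, c, mu0, mu1 > 0 and b, σ, B, ω ∈ ℝ, and let f, g : ℝ → ℝ be smooth. Define u : ℝ × ℝ → ℂ by u(x,t) = e^{iωt}·e^{iB(x−σt)}·f(x−σt) and v : ℝ × ℝ → ℝ by v(x,t) = g(x−σt). Then (u,v) satisfies the Schrödinger BBM–BBM system at every point (x,t) ∈ ℝ² if and only if (f,g) satisfies the Schrödinger BBM–BBM associated ODE system with parameters a1, c, mu0, mu1, b, wave speed σ, and phase shifts B, ω. -/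
noncomputable def G1c (B : ℝ) (f : ℝ → ℝ) : ℝ → ℂ :=
  fun s => Complex.I * B * (f s : ℂ) + ((deriv f s : ℝ) : ℂ)
noncomputable def G2c (B : ℝ) (f : ℝ → ℝ) : ℝ → ℂ :=
  fun s => Complex.I * B * G1c B f s + G1c B (deriv f) s
noncomputable def G3c (B : ℝ) (f : ℝ → ℝ) : ℝ → ℂ :=
  fun s => Complex.I * B * G2c B f s + G2c B (deriv f) s

lemma cd_deriv {f : ℝ → ℝ} (hf : ContDiff ℝ ((⊤:ℕ∞) : WithTop ℕ∞) f) : ContDiff ℝ ((⊤:ℕ∞) : WithTop ℕ∞) (deriv f) :=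
  (contDiff_infty_iff_deriv.mp hf).2

lemma hd_f {f : ℝ → ℝ} (hf : ContDiff ℝ ((⊤:ℕ∞) : WithTop ℕ∞) f) (s : ℝ) : HasDerivAt f (deriv f s) s :=
  ((contDiff_infty_iff_deriv.mp hf).1 s).hasDerivAt

lemma hG1 {f : ℝ → ℝ} (B : ℝ) (hf : ContDiff ℝ ((⊤:ℕ∞) : WithTop ℕ∞) f) (s : ℝ) :
    HasDerivAt (G1c B f) (G1c B (deriv f) s) s :=
  (((hd_f hf s).ofReal_comp).const_mul _).add ((hd_f (cd_deriv hf) s).ofReal_comp)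

lemma hG2 {f : ℝ → ℝ} (B : ℝ) (hf : ContDiff ℝ ((⊤:ℕ∞) : WithTop ℕ∞) f) (s : ℝ) :
    HasDerivAt (G2c B f) (G2c B (deriv f) s) s :=
  ((hG1 B hf s).const_mul _).add (hG1 B (cd_deriv hf) s)

lemma expShell {B : ℝ} {h h' : ℝ → ℂ} (hh : ∀ s, HasDerivAt h (h' s) s) (ξ : ℝ) :
    HasDerivAt (fun s : ℝ => Complex.exp (Complex.I * B * s) * h s)
      (Complex.exp (Complex.I * B * ξ) * (Complex.I * B * h ξ + h' ξ)) ξ := by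
  have hbase : HasDerivAt (fun s : ℝ => Complex.I * B * (s:ℂ)) (Complex.I * B) ξ := by
    simpa using ((hasDerivAt_id ξ).ofReal_comp).const_mul (Complex.I * (B:ℂ))
  have := hbase.cexp.fun_mul (hh ξ)
  exact this.congr_deriv (by ring)

lemma complex_eq_iff (E1 E2 : ℂ) (hE1 : E1 ≠ 0) (hE2 : E2 ≠ 0) (Z W : ℂ) (R S : ℝ)
    (h : Z - W = E1*E2*((R:ℂ) + Complex.I*S)) : (Z = W ↔ (R = 0 ∧ S = 0)) := by
  rw [← sub_eq_zero, h]
  simp [mul_eq_zero, hE1, hE2, Complex.ext_iff]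

lemma itd_two {F : Type*} [NormedAddCommGroup F] [NormedSpace ℝ F] (h : ℝ → F) :
    iteratedDeriv 2 h = deriv (deriv h) := by
  show iteratedDeriv (1+1) h = _
  rw [iteratedDeriv_succ, iteratedDeriv_one]

lemma itd_three {F : Type*} [NormedAddCommGroup F] [NormedSpace ℝ F] (h : ℝ → F) :
    iteratedDeriv 3 h = deriv (deriv (deriv h)) := by
  show iteratedDeriv (2+1) h = _
  rw [iteratedDeriv_succ, itd_two]


set_option maxHeartbeats 1000000 in
theorem stmt_1
    (a1 c mu0 mu1 b σ B ω : ℝ)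
    (ha1 : 0 < a1) (hc : 0 < c) (hmu0 : 0 < mu0) (hmu1 : 0 < mu1)
    (f g : ℝ → ℝ) (hf : ContDiff ℝ (⊤ : ℕ∞) f) (hg : ContDiff ℝ (⊤ : ℕ∞) g)
    (u : ℝ → ℝ → ℂ) (v : ℝ → ℝ → ℝ)
    (hu : ∀ x t : ℝ, u x t
      = Complex.exp (Complex.I * (ω:ℂ) * (t:ℂ))
        * Complex.exp (Complex.I * (B:ℂ) * ((x:ℂ) - (σ:ℂ) * (t:ℂ)))
        * ((f (x - σ*t) : ℝ) : ℂ))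
    (hv : ∀ x t : ℝ, v x t = g (x - σ*t)) :
    (∀ x t : ℝ,
      (deriv (fun t' => u x t') t + (mu0:ℂ) * deriv (fun x' => u x' t) x
        - (a1:ℂ) * deriv (fun t' => iteratedDeriv 2 (fun x' => u x' t') x) t
        + Complex.I * (b:ℂ) * iteratedDeriv 2 (fun x' => u x' t) x
        = -(deriv (fun x' => u x' t * ((v x' t : ℝ) : ℂ)) x)
          - Complex.I * (mu1:ℂ) * u x t * ((v x t : ℝ) : ℂ))
      ∧ (deriv (fun t' => v x t') t + deriv (fun x' => v x' t) x
          + v x t * deriv (fun x' => v x' t) x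
          - c * deriv (fun t' => iteratedDeriv 2 (fun x' => v x' t') x) t
        = -(1/2 : ℝ) * deriv (fun x' => ‖u x' t‖^2) x))
    ↔ (∀ ξ : ℝ,
      (deriv f ξ * g ξ + f ξ * deriv g ξ + a1*σ * iteratedDeriv 3 f ξ + (mu0 + 2*a1*B*ω - 3*a1*B^2*σ - σ - 2*b*B) * deriv f ξ = 0) ∧
      ((B + mu1) * f ξ * g ξ + (3*a1*B*σ + b - a1*ω) * iteratedDeriv 2 f ξ + (ω + B*mu0 + a1*B^2*ω - a1*B^3*σ - B*σ - b*B^2) * f ξ = 0) ∧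
      (f ξ * deriv f ξ + g ξ * deriv g ξ + (c*σ) * iteratedDeriv 3 g ξ + (1 - σ) * deriv g ξ = 0)) := by
  have hfi : ContDiff ℝ ((⊤:ℕ∞) : WithTop ℕ∞) f := hf.of_le (by simp)
  have hgi : ContDiff ℝ ((⊤:ℕ∞) : WithTop ℕ∞) g := hg.of_le (by simp)
  have HX : ∀ (h h' : ℝ → ℂ), (∀ s, HasDerivAt h (h' s) s) → ∀ x t : ℝ,
      HasDerivAt (fun x' : ℝ => h (x' - σ*t)) (h' (x - σ*t)) x := by
    intro h h' H x t
    exact HasDerivAt.comp_sub_const x (σ*t) (H (x - σ*t))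
  have HXr : ∀ (h h' : ℝ → ℝ), (∀ s, HasDerivAt h (h' s) s) → ∀ x t : ℝ,
      HasDerivAt (fun x' : ℝ => h (x' - σ*t)) (h' (x - σ*t)) x := by
    intro h h' H x t
    exact HasDerivAt.comp_sub_const x (σ*t) (H (x - σ*t))
  have hlin : ∀ x t : ℝ, HasDerivAt (fun t' : ℝ => x - σ*t') (-σ) t := by
    intro x t
    simpa using ((hasDerivAt_id t).const_mul σ).const_sub x
  have HT : ∀ (h h' : ℝ → ℂ), (∀ s, HasDerivAt h (h' s) s) → ∀ x t : ℝ,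
      HasDerivAt (fun t' : ℝ => Complex.exp (Complex.I*ω*t') * h (x - σ*t'))
        (Complex.I*ω*Complex.exp (Complex.I*ω*t) * h (x-σ*t)
          + Complex.exp (Complex.I*ω*t) * (h' (x-σ*t) * (-σ))) t := by
    intro h h' H x t
    have hexp : HasDerivAt (fun t' : ℝ => Complex.exp (Complex.I*ω*t'))
        (Complex.I*ω*Complex.exp (Complex.I*ω*t)) t := by
      have hb : HasDerivAt (fun t' : ℝ => Complex.I*ω*(t':ℂ)) (Complex.I*ω) t := by
        simpa using ((hasDerivAt_id t).ofReal_comp).const_mul (Complex.I*(ω:ℂ))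
      have := hb.cexp
      convert this using 1
      ring
    have hinner : HasDerivAt (fun t' : ℝ => h (x - σ*t')) (h' (x-σ*t) * (-σ)) t := by
      have := (H (x-σ*t)).scomp t (hlin x t)
      simpa [smul_eq_mul, mul_comm, Function.comp_def] using this
    exact hexp.mul hinner
  have HTr : ∀ (h h' : ℝ → ℝ), (∀ s, HasDerivAt h (h' s) s) → ∀ x t : ℝ,
      HasDerivAt (fun t' : ℝ => h (x - σ*t')) (h' (x-σ*t) * (-σ)) t := by
    intro h h' H x t
    have := (H (x-σ*t)).scomp t (hlin x t)
    simpa [smul_eq_mul, mul_comm, Function.comp_def] using this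
  have hP0 : ∀ s : ℝ, HasDerivAt (fun s : ℝ => Complex.exp (Complex.I*B*(s:ℂ)) * ((f s : ℝ):ℂ))
      (Complex.exp (Complex.I*B*(s:ℂ)) * G1c B f s) s := by
    intro s
    simpa [G1c] using expShell (fun s => (hd_f hfi s).ofReal_comp) s
  have hP1 : ∀ s : ℝ, HasDerivAt (fun s : ℝ => Complex.exp (Complex.I*B*(s:ℂ)) * G1c B f s)
      (Complex.exp (Complex.I*B*(s:ℂ)) * G2c B f s) s := by
    intro s
    simpa [G2c] using expShell (hG1 B hfi) s
  have hP2 : ∀ s : ℝ, HasDerivAt (fun s : ℝ => Complex.exp (Complex.I*B*(s:ℂ)) * G2c B f s)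
      (Complex.exp (Complex.I*B*(s:ℂ)) * G3c B f s) s := by
    intro s
    simpa [G3c] using expShell (hG2 B hfi) s
  have hPfg : ∀ s : ℝ, HasDerivAt
      (fun s : ℝ => Complex.exp (Complex.I*B*(s:ℂ)) * ((f s * g s : ℝ):ℂ))
      (Complex.exp (Complex.I*B*(s:ℂ)) * (Complex.I*B*((f s * g s : ℝ):ℂ)
        + ((deriv f s * g s + f s * deriv g s : ℝ):ℂ))) s := by
    intro s
    exact expShell (fun s => ((hd_f hfi s).mul (hd_f hgi s)).ofReal_comp) s
  have hu2 : ∀ x t : ℝ, u x t = Complex.exp (Complex.I*ω*t)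
      * (Complex.exp (Complex.I*B*((x - σ*t : ℝ):ℂ)) * ((f (x-σ*t) : ℝ):ℂ)) := by
    intro x t
    rw [hu x t]
    push_cast
    ring
  -- x-derivatives of u
  have dux : ∀ x t : ℝ, deriv (fun x' => u x' t) x
      = Complex.exp (Complex.I*ω*t) * (Complex.exp (Complex.I*B*((x-σ*t:ℝ):ℂ)) * G1c B f (x-σ*t)) := by
    intro x t
    have hfun : (fun x' => u x' t) = fun x' : ℝ => Complex.exp (Complex.I*ω*t)
        * (Complex.exp (Complex.I*B*((x'-σ*t:ℝ):ℂ)) * ((f (x'-σ*t):ℝ):ℂ)) :=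
      funext fun x' => hu2 x' t
    rw [hfun]
    exact ((HX _ _ hP0 x t).const_mul _).deriv
  have d2ux : ∀ x t : ℝ, deriv (deriv (fun x' => u x' t)) x
      = Complex.exp (Complex.I*ω*t) * (Complex.exp (Complex.I*B*((x-σ*t:ℝ):ℂ)) * G2c B f (x-σ*t)) := by
    intro x t
    have hfun : deriv (fun x' => u x' t) = fun x' : ℝ => Complex.exp (Complex.I*ω*t)
        * (Complex.exp (Complex.I*B*((x'-σ*t:ℝ):ℂ)) * G1c B f (x'-σ*t)) :=
      funext fun x' => dux x' t
    rw [hfun]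
    exact ((HX _ _ hP1 x t).const_mul _).deriv
  have dut : ∀ x t : ℝ, deriv (fun t' => u x t') t
      = Complex.I*ω*Complex.exp (Complex.I*ω*t)
          * (Complex.exp (Complex.I*B*((x-σ*t:ℝ):ℂ)) * ((f (x-σ*t):ℝ):ℂ))
        + Complex.exp (Complex.I*ω*t)
          * ((Complex.exp (Complex.I*B*((x-σ*t:ℝ):ℂ)) * G1c B f (x-σ*t)) * (-σ)) := by
    intro x t
    have hfun : (fun t' => u x t') = fun t' : ℝ => Complex.exp (Complex.I*ω*t')
        * (Complex.exp (Complex.I*B*((x-σ*t':ℝ):ℂ)) * ((f (x-σ*t'):ℝ):ℂ)) :=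
      funext fun t' => hu2 x t'
    rw [hfun]
    exact (HT _ _ hP0 x t).deriv
  have d2uxt : ∀ x t : ℝ, deriv (fun t' => deriv (deriv (fun x' => u x' t')) x) t
      = Complex.I*ω*Complex.exp (Complex.I*ω*t)
          * (Complex.exp (Complex.I*B*((x-σ*t:ℝ):ℂ)) * G2c B f (x-σ*t))
        + Complex.exp (Complex.I*ω*t)
          * ((Complex.exp (Complex.I*B*((x-σ*t:ℝ):ℂ)) * G3c B f (x-σ*t)) * (-σ)) := by
    intro x t
    have hfun : (fun t' => deriv (deriv (fun x' => u x' t')) x)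
        = fun t' : ℝ => Complex.exp (Complex.I*ω*t')
          * (Complex.exp (Complex.I*B*((x-σ*t':ℝ):ℂ)) * G2c B f (x-σ*t')) :=
      funext fun t' => d2ux x t'
    rw [hfun]
    exact (HT _ _ hP2 x t).deriv
  have duv : ∀ x t : ℝ, deriv (fun x' => u x' t * ((v x' t : ℝ):ℂ)) x
      = Complex.exp (Complex.I*ω*t) * (Complex.exp (Complex.I*B*((x-σ*t:ℝ):ℂ))
          * (Complex.I*B*((f (x-σ*t) * g (x-σ*t) : ℝ):ℂ)
            + ((deriv f (x-σ*t) * g (x-σ*t) + f (x-σ*t) * deriv g (x-σ*t) : ℝ):ℂ))) := by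
    intro x t
    have hfun : (fun x' => u x' t * ((v x' t : ℝ):ℂ)) = fun x' : ℝ => Complex.exp (Complex.I*ω*t)
        * (Complex.exp (Complex.I*B*((x'-σ*t:ℝ):ℂ)) * ((f (x'-σ*t) * g (x'-σ*t) : ℝ):ℂ)) := by
      funext x'
      rw [hu2 x' t, hv x' t]
      push_cast
      ring
    rw [hfun]
    exact ((HX _ _ hPfg x t).const_mul _).deriv
  -- v derivatives
  have dvx : ∀ x t : ℝ, deriv (fun x' => v x' t) x = deriv g (x-σ*t) := by
    intro x t
    have hfun : (fun x' => v x' t) = fun x' : ℝ => g (x'-σ*t) := funext fun x' => hv x' t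
    rw [hfun]
    exact (HXr _ _ (hd_f hgi) x t).deriv
  have d2vx : ∀ x t : ℝ, deriv (deriv (fun x' => v x' t)) x = deriv (deriv g) (x-σ*t) := by
    intro x t
    have hfun : deriv (fun x' => v x' t) = fun x' : ℝ => deriv g (x'-σ*t) :=
      funext fun x' => dvx x' t
    rw [hfun]
    exact (HXr _ _ (hd_f (cd_deriv hgi)) x t).deriv
  have dvt : ∀ x t : ℝ, deriv (fun t' => v x t') t = deriv g (x-σ*t) * (-σ) := by
    intro x t
    have hfun : (fun t' => v x t') = fun t' : ℝ => g (x-σ*t') := funext fun t' => hv x t'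
    rw [hfun]
    exact (HTr _ _ (hd_f hgi) x t).deriv
  have d2vxt : ∀ x t : ℝ, deriv (fun t' => deriv (deriv (fun x' => v x' t')) x) t
      = deriv (deriv (deriv g)) (x-σ*t) * (-σ) := by
    intro x t
    have hfun : (fun t' => deriv (deriv (fun x' => v x' t')) x)
        = fun t' : ℝ => deriv (deriv g) (x-σ*t') := funext fun t' => d2vx x t'
    rw [hfun]
    exact (HTr _ _ (hd_f (cd_deriv (cd_deriv hgi))) x t).deriv
  have dabs : ∀ x t : ℝ, deriv (fun x' => ‖u x' t‖^2) x
      = 2 * f (x-σ*t) * deriv f (x-σ*t) := by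
    intro x t
    have hfun : (fun x' => ‖u x' t‖^2) = fun x' : ℝ => (f (x'-σ*t))^2 := by
      funext x'
      rw [hu2 x' t]
      simp [norm_mul, Complex.norm_exp, Complex.norm_real, sq_abs]
    rw [hfun]
    have h1 : HasDerivAt (fun x' : ℝ => f (x'-σ*t)) (deriv f (x-σ*t)) x := HXr _ _ (hd_f hfi) x t
    rw [(h1.fun_pow 2).deriv]
    norm_num
  -- rewrite iterated derivatives in the goal
  simp only [itd_two, itd_three]
  have main : ∀ x t : ℝ,
      ((deriv (fun t' => u x t') t + (mu0:ℂ) * deriv (fun x' => u x' t) x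
        - (a1:ℂ) * deriv (fun t' => deriv (deriv (fun x' => u x' t')) x) t
        + Complex.I * (b:ℂ) * deriv (deriv (fun x' => u x' t)) x
        = -(deriv (fun x' => u x' t * ((v x' t : ℝ) : ℂ)) x)
          - Complex.I * (mu1:ℂ) * u x t * ((v x t : ℝ) : ℂ))
      ∧ (deriv (fun t' => v x t') t + deriv (fun x' => v x' t) x
          + v x t * deriv (fun x' => v x' t) x
          - c * deriv (fun t' => deriv (deriv (fun x' => v x' t')) x) t
        = -(1/2 : ℝ) * deriv (fun x' => ‖u x' t‖^2) x))
      ↔ ((deriv f (x-σ*t) * g (x-σ*t) + f (x-σ*t) * deriv g (x-σ*t)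
            + a1*σ * deriv (deriv (deriv f)) (x-σ*t)
            + (mu0 + 2*a1*B*ω - 3*a1*B^2*σ - σ - 2*b*B) * deriv f (x-σ*t) = 0) ∧
          ((B + mu1) * f (x-σ*t) * g (x-σ*t) + (3*a1*B*σ + b - a1*ω) * deriv (deriv f) (x-σ*t)
            + (ω + B*mu0 + a1*B^2*ω - a1*B^3*σ - B*σ - b*B^2) * f (x-σ*t) = 0) ∧
          (f (x-σ*t) * deriv f (x-σ*t) + g (x-σ*t) * deriv g (x-σ*t)
            + (c*σ) * deriv (deriv (deriv g)) (x-σ*t) + (1 - σ) * deriv g (x-σ*t) = 0)) := by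
    intro x t
    have e2 : (deriv (fun t' => v x t') t + deriv (fun x' => v x' t) x
          + v x t * deriv (fun x' => v x' t) x
          - c * deriv (fun t' => deriv (deriv (fun x' => v x' t')) x) t
        = -(1/2 : ℝ) * deriv (fun x' => ‖u x' t‖^2) x)
        ↔ (f (x-σ*t) * deriv f (x-σ*t) + g (x-σ*t) * deriv g (x-σ*t)
            + (c*σ) * deriv (deriv (deriv g)) (x-σ*t) + (1 - σ) * deriv g (x-σ*t) = 0) := by
      rw [dvt x t, dvx x t, d2vxt x t, dabs x t, hv x t]
      constructor <;> intro h' <;> linear_combination h'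
    have e1 : (deriv (fun t' => u x t') t + (mu0:ℂ) * deriv (fun x' => u x' t) x
        - (a1:ℂ) * deriv (fun t' => deriv (deriv (fun x' => u x' t')) x) t
        + Complex.I * (b:ℂ) * deriv (deriv (fun x' => u x' t)) x
        = -(deriv (fun x' => u x' t * ((v x' t : ℝ) : ℂ)) x)
          - Complex.I * (mu1:ℂ) * u x t * ((v x t : ℝ) : ℂ))
        ↔ ((deriv f (x-σ*t) * g (x-σ*t) + f (x-σ*t) * deriv g (x-σ*t)
            + a1*σ * deriv (deriv (deriv f)) (x-σ*t)
            + (mu0 + 2*a1*B*ω - 3*a1*B^2*σ - σ - 2*b*B) * deriv f (x-σ*t) = 0) ∧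
          ((B + mu1) * f (x-σ*t) * g (x-σ*t) + (3*a1*B*σ + b - a1*ω) * deriv (deriv f) (x-σ*t)
            + (ω + B*mu0 + a1*B^2*ω - a1*B^3*σ - B*σ - b*B^2) * f (x-σ*t) = 0)) := by
      rw [dut x t, dux x t, d2uxt x t, d2ux x t, duv x t, hu2 x t, hv x t]
      refine complex_eq_iff (Complex.exp (Complex.I*ω*t))
        (Complex.exp (Complex.I*B*((x-σ*t:ℝ):ℂ))) (Complex.exp_ne_zero _)
        (Complex.exp_ne_zero _) _ _ _ _ ?_
      simp only [G1c, G2c, G3c]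
      apply Complex.ext <;>
        simp only [Complex.add_re, Complex.add_im, Complex.sub_re, Complex.sub_im,
          Complex.mul_re, Complex.mul_im, Complex.neg_re, Complex.neg_im,
          Complex.ofReal_re, Complex.ofReal_im, Complex.I_re, Complex.I_im] <;>
        ring
    rw [e1, e2, and_assoc]
  constructor
  · intro H ξ
    have h' := (main ξ 0).mp (H ξ 0)
    simpa using h'
  · intro H x t
    exact (main x t).mpr (H (x - σ*t))
end

section
/- Let a0, c, mu0, mu1 > 0 and b, σ, B, ω ∈ ℝ, and let f, g : ℝ → ℝ be smooth. Define u : ℝ × ℝ → ℂ by u(x,t) = e^{iωt}·e^{iB(x−σt)}·f(x−σt) and v : ℝ × ℝ → ℝ by v(x,t) = g(x−σt). Then (u,v) satisfies the Schrödinger KdV–BBM system at every point (x,t) ∈ ℝ² if and only if (f,g) satisfies the Schrödinger KdV–BBM associated ODE system with parameters a0, c, mu0, mu1, b, wave speed σ, and phase shifts B, ω. -/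
noncomputable def skH (f : ℝ → ℝ) (B : ℝ) : ℝ → ℂ :=
  fun y => Complex.exp (Complex.I * B * y) * ((f y : ℝ) : ℂ)

lemma sk_ofReal_hasDerivAt {f : ℝ → ℝ} (hf : ContDiff ℝ (⊤ : ℕ∞) f) (k : ℕ) (ξ : ℝ) :
    HasDerivAt (fun x : ℝ => ((iteratedDeriv k f x : ℝ) : ℂ))
      (((iteratedDeriv (k+1) f ξ : ℝ)) : ℂ) ξ := by
  have h1 : DifferentiableAt ℝ (iteratedDeriv k f) ξ :=
    (hf.differentiable_iteratedDeriv k (by exact_mod_cast ENat.natCast_lt_top k)).differentiableAt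
  have h2 : HasDerivAt (iteratedDeriv k f) (iteratedDeriv (k+1) f ξ) ξ := by
    rw [iteratedDeriv_succ]; exact h1.hasDerivAt
  exact h2.ofReal_comp

lemma sk_exp_hasDerivAt (B : ℝ) (ξ : ℝ) :
    HasDerivAt (fun x : ℝ => Complex.exp (Complex.I * B * x))
      (Complex.I * B * Complex.exp (Complex.I * B * ξ)) ξ := by
  have h : HasDerivAt (fun z : ℂ => Complex.exp (Complex.I * B * z))
      (Complex.exp (Complex.I * B * ξ) * (Complex.I * B)) (ξ : ℂ) :=
    (((hasDerivAt_id (ξ:ℂ)).const_mul (Complex.I * B)).congr_deriv (by ring)).cexp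
  simpa [mul_comm] using h.comp_ofReal

lemma sk_prod_hasDerivAt {w : ℝ → ℂ} {w' : ℂ} {B : ℝ} {ξ : ℝ} (hw : HasDerivAt w w' ξ) :
    HasDerivAt (fun x : ℝ => Complex.exp (Complex.I * B * x) * w x)
      (Complex.exp (Complex.I * B * ξ) * (Complex.I * B * w ξ + w')) ξ := by
  have := (sk_exp_hasDerivAt B ξ).mul hw
  exact this.congr_deriv (by ring)

lemma sk_cmul_iteratedDeriv (c : ℂ) (w : ℝ → ℂ) (n : ℕ) :
    iteratedDeriv n (fun x => c * w x) = fun x => c * iteratedDeriv n w x := by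
  induction n with
  | zero => simp
  | succ n ih =>
    rw [iteratedDeriv_succ, ih, iteratedDeriv_succ]
    funext x
    exact deriv_const_mul_field c

lemma sk_scomp {F : Type*} [NormedAddCommGroup F] [NormedSpace ℝ F]
    {w : ℝ → F} {w' : F} {x σ t : ℝ} (hw : HasDerivAt w w' (x - σ*t)) :
    HasDerivAt (fun t' : ℝ => w (x - σ*t')) ((-σ) • w') t := by
  have hinner : HasDerivAt (fun t' : ℝ => x - σ*t') (-σ) t := by
    simpa using ((hasDerivAt_id t).const_mul σ).const_sub x
  simpa [Function.comp_def] using HasDerivAt.scomp t hw hinner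

lemma sk_F0 {f : ℝ → ℝ} (hf : ContDiff ℝ (⊤ : ℕ∞) f) (ξ : ℝ) :
    HasDerivAt (fun x : ℝ => ((f x : ℝ) : ℂ)) (((deriv f ξ : ℝ)) : ℂ) ξ := by
  simpa [iteratedDeriv_one] using sk_ofReal_hasDerivAt hf 0 ξ

lemma sk_F1 {f : ℝ → ℝ} (hf : ContDiff ℝ (⊤ : ℕ∞) f) (ξ : ℝ) :
    HasDerivAt (fun x : ℝ => ((deriv f x : ℝ) : ℂ)) (((iteratedDeriv 2 f ξ : ℝ)) : ℂ) ξ := by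
  have := sk_ofReal_hasDerivAt hf 1 ξ
  simpa [iteratedDeriv_one] using this

lemma sk_F2 {f : ℝ → ℝ} (hf : ContDiff ℝ (⊤ : ℕ∞) f) (ξ : ℝ) :
    HasDerivAt (fun x : ℝ => ((iteratedDeriv 2 f x : ℝ) : ℂ)) (((iteratedDeriv 3 f ξ : ℝ)) : ℂ) ξ :=
  sk_ofReal_hasDerivAt hf 2 ξ

lemma sk_skH_hasDerivAt {f : ℝ → ℝ} (hf : ContDiff ℝ (⊤ : ℕ∞) f) (B : ℝ) (ξ : ℝ) :
    HasDerivAt (skH f B)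
      (Complex.exp (Complex.I * B * ξ)
        * (Complex.I * B * ((f ξ : ℝ) : ℂ) + ((deriv f ξ : ℝ) : ℂ))) ξ :=
  sk_prod_hasDerivAt (sk_F0 hf ξ)

lemma sk_H1 {f : ℝ → ℝ} (hf : ContDiff ℝ (⊤ : ℕ∞) f) (B : ℝ) :
    deriv (skH f B)
      = fun ξ : ℝ => Complex.exp (Complex.I * B * ξ)
          * (Complex.I * B * ((f ξ : ℝ) : ℂ) + ((deriv f ξ : ℝ) : ℂ)) := by
  funext ξ
  exact (sk_skH_hasDerivAt hf B ξ).deriv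

lemma sk_H2 {f : ℝ → ℝ} (hf : ContDiff ℝ (⊤ : ℕ∞) f) (B : ℝ) :
    iteratedDeriv 2 (skH f B)
      = fun ξ : ℝ => Complex.exp (Complex.I * B * ξ)
          * (Complex.I * B * (Complex.I * B * ((f ξ : ℝ) : ℂ) + ((deriv f ξ : ℝ) : ℂ))
             + (Complex.I * B * ((deriv f ξ : ℝ) : ℂ) + ((iteratedDeriv 2 f ξ : ℝ) : ℂ))) := by
  rw [show (2:ℕ) = 1 + 1 from rfl, iteratedDeriv_succ, iteratedDeriv_one, sk_H1 hf B]
  funext ξ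
  have hw : HasDerivAt
      (fun x : ℝ => Complex.I * B * ((f x : ℝ) : ℂ) + ((deriv f x : ℝ) : ℂ))
      (Complex.I * B * ((deriv f ξ : ℝ) : ℂ) + ((iteratedDeriv 2 f ξ : ℝ) : ℂ)) ξ :=
    ((sk_F0 hf ξ).const_mul (Complex.I * B)).add (sk_F1 hf ξ)
  exact (sk_prod_hasDerivAt hw).deriv

lemma sk_H3 {f : ℝ → ℝ} (hf : ContDiff ℝ (⊤ : ℕ∞) f) (B : ℝ) :
    iteratedDeriv 3 (skH f B)
      = fun ξ : ℝ => Complex.exp (Complex.I * B * ξ)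
          * (Complex.I * B * (Complex.I * B * (Complex.I * B * ((f ξ : ℝ) : ℂ) + ((deriv f ξ : ℝ) : ℂ))
               + (Complex.I * B * ((deriv f ξ : ℝ) : ℂ) + ((iteratedDeriv 2 f ξ : ℝ) : ℂ)))
             + (Complex.I * B * (Complex.I * B * ((deriv f ξ : ℝ) : ℂ) + ((iteratedDeriv 2 f ξ : ℝ) : ℂ))
               + (Complex.I * B * ((iteratedDeriv 2 f ξ : ℝ) : ℂ) + ((iteratedDeriv 3 f ξ : ℝ) : ℂ)))) := by
  rw [show (3:ℕ) = 2 + 1 from rfl, iteratedDeriv_succ, sk_H2 hf B]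
  funext ξ
  have hw : HasDerivAt
      (fun x : ℝ => Complex.I * B * (Complex.I * B * ((f x : ℝ) : ℂ) + ((deriv f x : ℝ) : ℂ))
        + (Complex.I * B * ((deriv f x : ℝ) : ℂ) + ((iteratedDeriv 2 f x : ℝ) : ℂ)))
      (Complex.I * B * (Complex.I * B * ((deriv f ξ : ℝ) : ℂ) + ((iteratedDeriv 2 f ξ : ℝ) : ℂ))
        + (Complex.I * B * ((iteratedDeriv 2 f ξ : ℝ) : ℂ) + ((iteratedDeriv 3 f ξ : ℝ) : ℂ))) ξ :=
    ((((sk_F0 hf ξ).const_mul (Complex.I * B)).add (sk_F1 hf ξ)).const_mul (Complex.I * B)).add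
      (((sk_F1 hf ξ).const_mul (Complex.I * B)).add (sk_F2 hf ξ))
  exact (sk_prod_hasDerivAt hw).deriv

lemma sk_factor_iff {C E : ℂ} (hC : C ≠ 0) (hE : E ≠ 0) {X Y : ℂ} {A B : ℝ}
    (hkey : X - Y = C * E * ((A:ℂ) + (B:ℂ) * Complex.I)) :
    (X = Y) ↔ (A = 0 ∧ B = 0) := by
  constructor
  · intro h
    have h0 : C * E * ((A:ℂ) + (B:ℂ) * Complex.I) = 0 := by rw [← hkey, h, sub_self]
    have hz : (A:ℂ) + (B:ℂ) * Complex.I = 0 := by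
      rcases mul_eq_zero.mp h0 with h' | h'
      · rcases mul_eq_zero.mp h' with h'' | h''
        · exact absurd h'' hC
        · exact absurd h'' hE
      · exact h'
    constructor
    · simpa using congrArg Complex.re hz
    · simpa using congrArg Complex.im hz
  · rintro ⟨hA, hB⟩
    have h0 : X - Y = 0 := by rw [hkey]; simp [hA, hB]
    exact sub_eq_zero.mp h0

lemma sk_core
    (a0 c mu0 mu1 b σ B ω : ℝ)
    (f g : ℝ → ℝ) (hf : ContDiff ℝ (⊤ : ℕ∞) f) (hg : ContDiff ℝ (⊤ : ℕ∞) g)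
    (u : ℝ → ℝ → ℂ) (v : ℝ → ℝ → ℝ)
    (hu : ∀ x t : ℝ, u x t
      = Complex.exp (Complex.I * (ω:ℂ) * (t:ℂ))
        * Complex.exp (Complex.I * (B:ℂ) * ((x:ℂ) - (σ:ℂ) * (t:ℂ)))
        * ((f (x - σ*t) : ℝ) : ℂ))
    (hv : ∀ x t : ℝ, v x t = g (x - σ*t))
    (x t : ℝ) :
    ((deriv (fun t' => u x t') t + (mu0:ℂ) * deriv (fun x' => u x' t) x
        + (a0:ℂ) * iteratedDeriv 3 (fun x' => u x' t) x
        + Complex.I * (b:ℂ) * iteratedDeriv 2 (fun x' => u x' t) x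
        = -(deriv (fun x' => u x' t * ((v x' t : ℝ) : ℂ)) x)
          - Complex.I * (mu1:ℂ) * u x t * ((v x t : ℝ) : ℂ))
      ∧ (deriv (fun t' => v x t') t + deriv (fun x' => v x' t) x
          + v x t * deriv (fun x' => v x' t) x
          - c * deriv (fun t' => iteratedDeriv 2 (fun x' => v x' t') x) t
        = -(1/2 : ℝ) * deriv (fun x' => (‖u x' t‖)^2) x))
    ↔ ((deriv f (x-σ*t) * g (x-σ*t) + f (x-σ*t) * deriv g (x-σ*t)
          + a0 * iteratedDeriv 3 f (x-σ*t) + (mu0 - σ - 3*a0*B^2 - 2*b*B) * deriv f (x-σ*t) = 0) ∧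
      ((B + mu1) * f (x-σ*t) * g (x-σ*t) + (3*a0*B + b) * iteratedDeriv 2 f (x-σ*t)
          + (ω + B*mu0 - B*σ - a0*B^3 - b*B^2) * f (x-σ*t) = 0) ∧
      (f (x-σ*t) * deriv f (x-σ*t) + g (x-σ*t) * deriv g (x-σ*t)
          + (c*σ) * iteratedDeriv 3 g (x-σ*t) + (1 - σ) * deriv g (x-σ*t) = 0)) := by
  have hfd : Differentiable ℝ f := hf.differentiable (by simp)
  have hgd : Differentiable ℝ g := hg.differentiable (by simp)
  have hxfun : (fun x' : ℝ => u x' t) = fun x' : ℝ =>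
      Complex.exp (Complex.I * ω * (t:ℂ)) * skH f B (x' + -(σ*t)) := by
    funext x'
    rw [hu]
    simp only [skH]
    push_cast
    ring_nf
  have keyx : ∀ n : ℕ, iteratedDeriv n (fun x' : ℝ => u x' t) x
      = Complex.exp (Complex.I * ω * (t:ℂ)) * iteratedDeriv n (skH f B) (x - σ*t) := by
    intro n
    rw [hxfun, sk_cmul_iteratedDeriv (Complex.exp (Complex.I * ω * (t:ℂ)))
      (fun x' => skH f B (x' + -(σ*t))) n]
    rw [iteratedDeriv_comp_add_const n (skH f B) (-(σ*t))]
    norm_num [sub_eq_add_neg]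
  have hux1 : deriv (fun x' : ℝ => u x' t) x
      = Complex.exp (Complex.I * ω * (t:ℂ)) *
        (Complex.exp (Complex.I * B * ((x - σ*t : ℝ):ℂ))
          * (Complex.I * B * ((f (x - σ*t) : ℝ):ℂ) + ((deriv f (x - σ*t) : ℝ):ℂ))) := by
    have h := keyx 1
    simp only [iteratedDeriv_one] at h
    rw [h, sk_H1 hf B]
  have hux2 : iteratedDeriv 2 (fun x' : ℝ => u x' t) x
      = Complex.exp (Complex.I * ω * (t:ℂ)) *
        (Complex.exp (Complex.I * B * ((x - σ*t : ℝ):ℂ))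
          * (Complex.I * B * (Complex.I * B * ((f (x - σ*t) : ℝ):ℂ) + ((deriv f (x - σ*t) : ℝ):ℂ))
             + (Complex.I * B * ((deriv f (x - σ*t) : ℝ):ℂ) + ((iteratedDeriv 2 f (x - σ*t) : ℝ):ℂ)))) := by
    rw [keyx 2, sk_H2 hf B]
  have hux3 : iteratedDeriv 3 (fun x' : ℝ => u x' t) x
      = Complex.exp (Complex.I * ω * (t:ℂ)) *
        (Complex.exp (Complex.I * B * ((x - σ*t : ℝ):ℂ))
          * (Complex.I * B * (Complex.I * B * (Complex.I * B * ((f (x - σ*t) : ℝ):ℂ) + ((deriv f (x - σ*t) : ℝ):ℂ))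
               + (Complex.I * B * ((deriv f (x - σ*t) : ℝ):ℂ) + ((iteratedDeriv 2 f (x - σ*t) : ℝ):ℂ)))
             + (Complex.I * B * (Complex.I * B * ((deriv f (x - σ*t) : ℝ):ℂ) + ((iteratedDeriv 2 f (x - σ*t) : ℝ):ℂ))
               + (Complex.I * B * ((iteratedDeriv 2 f (x - σ*t) : ℝ):ℂ) + ((iteratedDeriv 3 f (x - σ*t) : ℝ):ℂ))))) := by
    rw [keyx 3, sk_H3 hf B]
  have huvfun : (fun x' : ℝ => u x' t * ((v x' t : ℝ):ℂ))
      = fun x' : ℝ => Complex.exp (Complex.I * ω * (t:ℂ)) * skH (fun y => f y * g y) B (x' + -(σ*t)) := by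
    funext x'
    rw [hu, hv]
    simp only [skH]
    push_cast
    ring_nf
  have hder_fg : deriv (fun y => f y * g y) = fun y => deriv f y * g y + f y * deriv g y :=
    funext fun y => ((hfd y).hasDerivAt.mul (hgd y).hasDerivAt).deriv
  have huv : deriv (fun x' : ℝ => u x' t * ((v x' t : ℝ):ℂ)) x
      = Complex.exp (Complex.I * ω * (t:ℂ)) *
        (Complex.exp (Complex.I * B * ((x - σ*t : ℝ):ℂ))
          * (Complex.I * B * ((f (x - σ*t) * g (x - σ*t) : ℝ):ℂ)
             + ((deriv f (x - σ*t) * g (x - σ*t) + f (x - σ*t) * deriv g (x - σ*t) : ℝ):ℂ))) := by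
    rw [huvfun, deriv_const_mul_field,
      deriv_comp_add_const (skH (fun y => f y * g y) B) (-(σ*t)) x,
      sk_H1 (hf.mul hg) B]
    rw [show x + -(σ*t) = x - σ*t by ring, hder_fg]
  have htfun : (fun t' : ℝ => u x t') = fun t' : ℝ =>
      Complex.exp (Complex.I * ω * (t':ℂ)) * skH f B (x - σ*t') := by
    funext t'
    rw [hu]
    simp only [skH]
    push_cast
    ring_nf
  have e1 : deriv (fun t' : ℝ => u x t') t
      = Complex.I * ω * Complex.exp (Complex.I * ω * (t:ℂ)) * skH f B (x - σ*t)
        + Complex.exp (Complex.I * ω * (t:ℂ)) * ((-σ) •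
            (Complex.exp (Complex.I * B * ((x - σ*t : ℝ):ℂ))
              * (Complex.I * B * ((f (x - σ*t) : ℝ):ℂ) + ((deriv f (x - σ*t) : ℝ):ℂ)))) := by
    rw [htfun]
    exact ((sk_exp_hasDerivAt ω t).mul (sk_scomp (sk_skH_hasDerivAt hf B (x - σ*t)))).deriv
  have ev_t : deriv (fun t' : ℝ => v x t') t = -σ * deriv g (x - σ*t) := by
    have h : (fun t' : ℝ => v x t') = fun t' : ℝ => g (x - σ*t') := funext fun t' => hv x t'
    rw [h]
    exact (sk_scomp ((hgd (x - σ*t)).hasDerivAt)).deriv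
  have ev_x : deriv (fun x' : ℝ => v x' t) x = deriv g (x - σ*t) := by
    have h : (fun x' : ℝ => v x' t) = fun x' : ℝ => g (x' - σ*t) := funext fun x' => hv x' t
    rw [h, deriv_comp_sub_const]
  have ev2 : deriv (fun t' : ℝ => iteratedDeriv 2 (fun x' : ℝ => v x' t') x) t
      = -σ * iteratedDeriv 3 g (x - σ*t) := by
    have h : (fun t' : ℝ => iteratedDeriv 2 (fun x' : ℝ => v x' t') x)
        = fun t' : ℝ => iteratedDeriv 2 g (x - σ*t') := by
      funext t'
      have h2 : (fun x' : ℝ => v x' t') = fun x' : ℝ => g (x' + -(σ*t')) := by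
        funext x'
        rw [hv]
        ring_nf
      rw [h2, iteratedDeriv_comp_add_const 2 g (-(σ*t'))]
      norm_num [sub_eq_add_neg]
    rw [h]
    have houter : HasDerivAt (iteratedDeriv 2 g) (iteratedDeriv 3 g (x - σ*t)) (x - σ*t) := by
      have hd : DifferentiableAt ℝ (iteratedDeriv 2 g) (x - σ*t) :=
        ((hg.differentiable_iteratedDeriv 2
          (by exact WithTop.coe_lt_coe.mpr (ENat.natCast_lt_top 2)))).differentiableAt
      have h4 : iteratedDeriv (2+1) g = deriv (iteratedDeriv 2 g) := iteratedDeriv_succ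
      have h3 := hd.hasDerivAt
      rw [← h4] at h3
      exact h3
    exact (sk_scomp houter).deriv
  have evabs : deriv (fun x' : ℝ => (‖u x' t‖)^2) x
      = 2 * f (x - σ*t) * deriv f (x - σ*t) := by
    have h : (fun x' : ℝ => (‖u x' t‖)^2) = fun x' : ℝ => (f (x' - σ*t))^2 := by
      funext x'
      rw [hu]
      simp [map_mul, Complex.norm_exp, Complex.norm_real, Complex.mul_re, Complex.I_re,
        Complex.I_im, Complex.ofReal_re, Complex.ofReal_im, sq_abs, mul_pow]
    rw [h]
    have h1 : HasDerivAt f (deriv f (x - σ*t)) (x - σ*t) := (hfd _).hasDerivAt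
    have h2 := HasDerivAt.comp_sub_const x (σ*t) (h1.pow 2)
    simpa using h2.deriv
  rw [e1, hux1, hux3, hux2, huv, ev_t, ev_x, ev2, evabs, hu x t, hv x t]
  rw [← and_assoc]
  refine and_congr ?_ ?_
  · refine sk_factor_iff (C := Complex.exp (Complex.I * ω * (t:ℂ)))
      (E := Complex.exp (Complex.I * B * ((x - σ*t : ℝ):ℂ)))
      (Complex.exp_ne_zero _) (Complex.exp_ne_zero _) ?_
    simp only [skH, Complex.real_smul]
    push_cast
    linear_combination (Complex.exp (Complex.I * ω * (t:ℂ))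
        * Complex.exp (Complex.I * B * ((x:ℂ) - σ*t))
        * ((3*(a0:ℂ)*B^2 + 2*b*B) * ((deriv f (x - σ*t) : ℝ):ℂ)
           + ((a0:ℂ)*B^3 + b*B^2) * ((f (x - σ*t) : ℝ):ℂ) * Complex.I)) * Complex.I_sq
  · constructor <;> intro h' <;> linear_combination h'

theorem stmt_2
    (a0 c mu0 mu1 b σ B ω : ℝ)
    (ha0 : 0 < a0) (hc : 0 < c) (hmu0 : 0 < mu0) (hmu1 : 0 < mu1)
    (f g : ℝ → ℝ) (hf : ContDiff ℝ (⊤ : ℕ∞) f) (hg : ContDiff ℝ (⊤ : ℕ∞) g)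
    (u : ℝ → ℝ → ℂ) (v : ℝ → ℝ → ℝ)
    (hu : ∀ x t : ℝ, u x t
      = Complex.exp (Complex.I * (ω:ℂ) * (t:ℂ))
        * Complex.exp (Complex.I * (B:ℂ) * ((x:ℂ) - (σ:ℂ) * (t:ℂ)))
        * ((f (x - σ*t) : ℝ) : ℂ))
    (hv : ∀ x t : ℝ, v x t = g (x - σ*t)) :
    (∀ x t : ℝ,
      (deriv (fun t' => u x t') t + (mu0:ℂ) * deriv (fun x' => u x' t) x
        + (a0:ℂ) * iteratedDeriv 3 (fun x' => u x' t) x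
        + Complex.I * (b:ℂ) * iteratedDeriv 2 (fun x' => u x' t) x
        = -(deriv (fun x' => u x' t * ((v x' t : ℝ) : ℂ)) x)
          - Complex.I * (mu1:ℂ) * u x t * ((v x t : ℝ) : ℂ))
      ∧ (deriv (fun t' => v x t') t + deriv (fun x' => v x' t) x
          + v x t * deriv (fun x' => v x' t) x
          - c * deriv (fun t' => iteratedDeriv 2 (fun x' => v x' t') x) t
        = -(1/2 : ℝ) * deriv (fun x' => (‖u x' t‖)^2) x))
    ↔ (∀ ξ : ℝ,
      (deriv f ξ * g ξ + f ξ * deriv g ξ + a0 * iteratedDeriv 3 f ξ + (mu0 - σ - 3*a0*B^2 - 2*b*B) * deriv f ξ = 0) ∧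
      ((B + mu1) * f ξ * g ξ + (3*a0*B + b) * iteratedDeriv 2 f ξ + (ω + B*mu0 - B*σ - a0*B^3 - b*B^2) * f ξ = 0) ∧
      (f ξ * deriv f ξ + g ξ * deriv g ξ + (c*σ) * iteratedDeriv 3 g ξ + (1 - σ) * deriv g ξ = 0)) := by
  constructor
  · intro h ξ
    have := (sk_core a0 c mu0 mu1 b σ B ω f g hf hg u v hu hv ξ 0).mp (h ξ 0)
    simpa using this
  · intro h x t
    exact (sk_core a0 c mu0 mu1 b σ B ω f g hf hg u v hu hv x t).mpr (h (x - σ*t))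
end

section
/- Let a1, c, mu0, mu1 > 0 and b, σ, B, ω ∈ ℝ, and let f, g : ℝ → ℝ be smooth. Define u : ℝ × ℝ → ℂ by u(x,t) = e^{iωt}·e^{iB(x−σt)}·f(x−σt) and v : ℝ × ℝ → ℝ by v(x,t) = g(x−σt). Then (u,v) satisfies the Schrödinger BBM–KdV system at every point (x,t) ∈ ℝ² if and only if (f,g) satisfies the Schrödinger BBM–KdV associated ODE system with parameters a1, c, mu0, mu1, b, wave speed σ, and phase shifts B, ω. -/
open Complex

private noncomputable def cE (B : ℝ) (y : ℝ) : ℂ := Complex.exp (Complex.I * B * y)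
private noncomputable def cP0 (f : ℝ → ℝ) (y : ℝ) : ℂ := ((f y : ℝ) : ℂ)
private noncomputable def cP1 (B : ℝ) (f : ℝ → ℝ) (y : ℝ) : ℂ :=
  ((deriv f y : ℝ) : ℂ) + ((B * f y : ℝ) : ℂ) * Complex.I
private noncomputable def cP2 (B : ℝ) (f : ℝ → ℝ) (y : ℝ) : ℂ :=
  ((deriv (deriv f) y - B^2 * f y : ℝ) : ℂ) + ((2*B*deriv f y : ℝ) : ℂ) * Complex.I
private noncomputable def cP3 (B : ℝ) (f : ℝ → ℝ) (y : ℝ) : ℂ :=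
  ((deriv (deriv (deriv f)) y - 3*B^2*deriv f y : ℝ) : ℂ)
  + ((3*B*deriv (deriv f) y - B^3 * f y : ℝ) : ℂ) * Complex.I

private lemma hasDerivAt_cE (B : ℝ) (y : ℝ) :
    HasDerivAt (cE B) (Complex.I * B * cE B y) y := by
  have h1 : HasDerivAt (fun z : ℂ => Complex.I * B * z) (Complex.I * B) (y:ℂ) := by
    simpa using (hasDerivAt_id (y:ℂ)).const_mul (Complex.I * (B:ℂ))
  have h2 := (h1.cexp).comp_ofReal
  show HasDerivAt (fun y : ℝ => Complex.exp (Complex.I * B * y)) _ y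
  simpa [cE, mul_comm] using h2

private lemma cEP0' {B : ℝ} {f : ℝ → ℝ} (hfd : Differentiable ℝ f) (y : ℝ) :
    HasDerivAt (fun y => cE B y * cP0 f y) (cE B y * cP1 B f y) y := by
  have h := (hasDerivAt_cE B y).mul ((hfd y).hasDerivAt.ofReal_comp (f := f))
  refine h.congr_deriv ?_
  symm
  simp only [cE, cP0, cP1]
  push_cast
  ring

private lemma cEP1' {B : ℝ} {f : ℝ → ℝ} (hfd : Differentiable ℝ f)
    (hf1d : Differentiable ℝ (deriv f)) (y : ℝ) :
    HasDerivAt (fun y => cE B y * cP1 B f y) (cE B y * cP2 B f y) y := by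
  have hp : HasDerivAt (cP1 B f)
      (((deriv (deriv f) y : ℝ) : ℂ) + ((B * deriv f y : ℝ) : ℂ) * Complex.I) y :=
    ((hf1d y).hasDerivAt.ofReal_comp).add
      ((((hfd y).hasDerivAt.const_mul B).ofReal_comp).mul_const Complex.I)
  have h := (hasDerivAt_cE B y).mul hp
  refine h.congr_deriv ?_
  symm
  simp only [cE, cP1, cP2]
  push_cast
  linear_combination (-(Complex.exp (Complex.I * B * y) * (B:ℂ)^2 * ((f y : ℝ) : ℂ))) * Complex.I_sq

private lemma cEP2' {B : ℝ} {f : ℝ → ℝ} (hfd : Differentiable ℝ f)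
    (hf1d : Differentiable ℝ (deriv f)) (hf2d : Differentiable ℝ (deriv (deriv f))) (y : ℝ) :
    HasDerivAt (fun y => cE B y * cP2 B f y) (cE B y * cP3 B f y) y := by
  have hp : HasDerivAt (cP2 B f)
      (((deriv (deriv (deriv f)) y - B^2 * deriv f y : ℝ) : ℂ)
        + ((2*B*deriv (deriv f) y : ℝ) : ℂ) * Complex.I) y := by
    have h1 : HasDerivAt (fun y => deriv (deriv f) y - B^2 * f y)
        (deriv (deriv (deriv f)) y - B^2 * deriv f y) y :=
      (hf2d y).hasDerivAt.sub ((hfd y).hasDerivAt.const_mul (B^2))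
    have h2 : HasDerivAt (fun y => 2*B*deriv f y) (2*B*deriv (deriv f) y) y :=
      (hf1d y).hasDerivAt.const_mul (2*B)
    exact (h1.ofReal_comp).add ((h2.ofReal_comp).mul_const Complex.I)
  have h := (hasDerivAt_cE B y).mul hp
  refine h.congr_deriv ?_
  symm
  simp only [cE, cP2, cP3]
  push_cast
  linear_combination (-(2*Complex.exp (Complex.I * B * y) * (B:ℂ)^2*((deriv f y : ℝ):ℂ))) * Complex.I_sq

theorem stmt_3
    (a1 c mu0 mu1 b σ B ω : ℝ)
    (ha1 : 0 < a1) (hc : 0 < c) (hmu0 : 0 < mu0) (hmu1 : 0 < mu1)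
    (f g : ℝ → ℝ) (hf : ContDiff ℝ (⊤ : ℕ∞) f) (hg : ContDiff ℝ (⊤ : ℕ∞) g)
    (u : ℝ → ℝ → ℂ) (v : ℝ → ℝ → ℝ)
    (hu : ∀ x t : ℝ, u x t
      = Complex.exp (Complex.I * (ω:ℂ) * (t:ℂ))
        * Complex.exp (Complex.I * (B:ℂ) * ((x:ℂ) - (σ:ℂ) * (t:ℂ)))
        * ((f (x - σ*t) : ℝ) : ℂ))
    (hv : ∀ x t : ℝ, v x t = g (x - σ*t)) :
    (∀ x t : ℝ,
      (deriv (fun t' => u x t') t + (mu0:ℂ) * deriv (fun x' => u x' t) x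
        - (a1:ℂ) * deriv (fun t' => iteratedDeriv 2 (fun x' => u x' t') x) t
        + Complex.I * (b:ℂ) * iteratedDeriv 2 (fun x' => u x' t) x
        = -(deriv (fun x' => u x' t * ((v x' t : ℝ) : ℂ)) x)
          - Complex.I * (mu1:ℂ) * u x t * ((v x t : ℝ) : ℂ))
      ∧ (deriv (fun t' => v x t') t + deriv (fun x' => v x' t) x
          + v x t * deriv (fun x' => v x' t) x
          + c * iteratedDeriv 3 (fun x' => v x' t) x
        = -(1/2 : ℝ) * deriv (fun x' => ‖u x' t‖^2) x))
    ↔ (∀ ξ : ℝ,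
      (deriv f ξ * g ξ + f ξ * deriv g ξ + a1*σ * iteratedDeriv 3 f ξ + (mu0 + 2*a1*B*ω - 3*a1*B^2*σ - σ - 2*b*B) * deriv f ξ = 0) ∧
      ((B + mu1) * f ξ * g ξ + (3*a1*B*σ + b - a1*ω) * iteratedDeriv 2 f ξ + (ω + B*mu0 + a1*B^2*ω - a1*B^3*σ - B*σ - b*B^2) * f ξ = 0) ∧
      (f ξ * deriv f ξ + g ξ * deriv g ξ + c * iteratedDeriv 3 g ξ + (1 - σ) * deriv g ξ = 0)) := by
  -- smoothness / differentiability facts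
  have hfa : ContDiff ℝ (⊤:ℕ∞) f := hf.of_le (by simp)
  have hga : ContDiff ℝ (⊤:ℕ∞) g := hg.of_le (by simp)
  have hf1 : ContDiff ℝ (⊤:ℕ∞) (deriv f) := (contDiff_infty_iff_deriv.mp hfa).2
  have hf2 : ContDiff ℝ (⊤:ℕ∞) (deriv (deriv f)) := (contDiff_infty_iff_deriv.mp hf1).2
  have hg1 : ContDiff ℝ (⊤:ℕ∞) (deriv g) := (contDiff_infty_iff_deriv.mp hga).2
  have hg2 : ContDiff ℝ (⊤:ℕ∞) (deriv (deriv g)) := (contDiff_infty_iff_deriv.mp hg1).2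
  have hle : (1 : WithTop ℕ∞) ≤ ((⊤:ℕ∞) : WithTop ℕ∞) := by exact_mod_cast le_top
  have hfd : Differentiable ℝ f := hfa.differentiable (by simp)
  have hf1d : Differentiable ℝ (deriv f) := hf1.differentiable (by simp)
  have hf2d : Differentiable ℝ (deriv (deriv f)) := hf2.differentiable (by simp)
  have hgd : Differentiable ℝ g := hga.differentiable (by simp)
  have hg1d : Differentiable ℝ (deriv g) := hg1.differentiable (by simp)
  have hg2d : Differentiable ℝ (deriv (deriv g)) := hg2.differentiable (by simp)
  -- iteratedDeriv normalisation
  have it2c : ∀ (h : ℝ → ℂ), iteratedDeriv 2 h = deriv (deriv h) := by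
    intro h
    rw [show (2:ℕ) = 1+1 from rfl, iteratedDeriv_succ, iteratedDeriv_one]
  have it2r : ∀ (h : ℝ → ℝ), iteratedDeriv 2 h = deriv (deriv h) := by
    intro h
    rw [show (2:ℕ) = 1+1 from rfl, iteratedDeriv_succ, iteratedDeriv_one]
  have it3r : ∀ (h : ℝ → ℝ), iteratedDeriv 3 h = deriv (deriv (deriv h)) := by
    intro h
    rw [show (3:ℕ) = 2+1 from rfl, iteratedDeriv_succ, show (2:ℕ) = 1+1 from rfl,
      iteratedDeriv_succ, iteratedDeriv_one]
  simp only [it2c, it2r, it3r]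
  -- basic translation derivatives
  have hsub : ∀ (x s : ℝ), HasDerivAt (fun x' : ℝ => x' - s) 1 x :=
    fun x s => (hasDerivAt_id x).sub_const _
  have hlin : ∀ (x t : ℝ), HasDerivAt (fun t' : ℝ => x - σ*t') (-σ) t := by
    intro x t
    simpa using ((hasDerivAt_id t).const_mul σ).const_sub x
  have htrans : ∀ (F F' : ℝ → ℂ), (∀ y, HasDerivAt F (F' y) y) →
      ∀ (x s : ℝ), HasDerivAt (fun x' => F (x' - s)) (F' (x - s)) x := by
    intro F F' hF x s
    simpa [Function.comp_def] using HasDerivAt.scomp_of_eq (hg := hF (x - s)) (hh := hsub x s) (hy := rfl)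
  have htrant : ∀ (F F' : ℝ → ℂ), (∀ y, HasDerivAt F (F' y) y) →
      ∀ (x t : ℝ), HasDerivAt (fun t' => F (x - σ*t')) (((-σ:ℝ):ℂ) * F' (x - σ*t)) t := by
    intro F F' hF x t
    simpa [Function.comp_def, Complex.real_smul] using HasDerivAt.scomp_of_eq (hg := hF (x - σ*t)) (hh := hlin x t) (hy := rfl)
  -- rewriting u and v as canonical forms
  have hu' : ∀ x t : ℝ, u x t = cE ω t * (cE B (x - σ*t) * cP0 f (x - σ*t)) := by
    intro x t
    rw [hu]
    simp only [cE, cP0]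
    push_cast
    ring
  have hufun : ∀ t : ℝ, (fun x' => u x' t)
      = fun x' => cE ω t * (cE B (x' - σ*t) * cP0 f (x' - σ*t)) :=
    fun t => funext fun x' => hu' x' t
  have hutfun : ∀ x : ℝ, (fun t' => u x t')
      = fun t' => cE ω t' * (cE B (x - σ*t') * cP0 f (x - σ*t')) :=
    fun x => funext fun t' => hu' x t'
  -- x-derivatives of u
  have hDux : ∀ x t : ℝ, HasDerivAt (fun x' => u x' t)
      (cE ω t * (cE B (x - σ*t) * cP1 B f (x - σ*t))) x := by
    intro x t
    rw [hufun t]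
    exact (htrans _ _ (cEP0' hfd) x (σ*t)).const_mul _
  have hDux_eq : ∀ x t : ℝ, deriv (fun x' => u x' t)
      = fun x' => cE ω t * (cE B (x' - σ*t) * cP1 B f (x' - σ*t)) :=
    fun x t => funext fun x' => (hDux x' t).deriv
  have hD2ux : ∀ x t : ℝ, HasDerivAt (deriv (fun x' => u x' t))
      (cE ω t * (cE B (x - σ*t) * cP2 B f (x - σ*t))) x := by
    intro x t
    rw [hDux_eq x t]
    exact (htrans _ _ (cEP1' hfd hf1d) x (σ*t)).const_mul _
  have hI2 : ∀ x t : ℝ, deriv (deriv (fun x' => u x' t)) x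
      = cE ω t * (cE B (x - σ*t) * cP2 B f (x - σ*t)) :=
    fun x t => (hD2ux x t).deriv
  -- t-derivative of u
  have hDut : ∀ x t : ℝ, deriv (fun t' => u x t') t
      = Complex.I * ω * cE ω t * (cE B (x - σ*t) * cP0 f (x - σ*t))
        + cE ω t * (((-σ:ℝ):ℂ) * (cE B (x - σ*t) * cP1 B f (x - σ*t))) := by
    intro x t
    rw [hutfun x]
    exact ((hasDerivAt_cE ω t).mul (htrant _ _ (cEP0' hfd) x t)).deriv
  -- t-derivative of the second x-derivative
  have hI2fun : ∀ x : ℝ, (fun t' => deriv (deriv (fun x' => u x' t')) x)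
      = fun t' => cE ω t' * (cE B (x - σ*t') * cP2 B f (x - σ*t')) :=
    fun x => funext fun t' => hI2 x t'
  have hDut2 : ∀ x t : ℝ, deriv (fun t' => deriv (deriv (fun x' => u x' t')) x) t
      = Complex.I * ω * cE ω t * (cE B (x - σ*t) * cP2 B f (x - σ*t))
        + cE ω t * (((-σ:ℝ):ℂ) * (cE B (x - σ*t) * cP3 B f (x - σ*t))) := by
    intro x t
    rw [hI2fun x]
    exact ((hasDerivAt_cE ω t).mul (htrant _ _ (cEP2' hfd hf1d hf2d) x t)).deriv
  -- derivative of u * v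
  have huvfun : ∀ t : ℝ, (fun x' => u x' t * ((v x' t : ℝ) : ℂ))
      = fun x' => cE ω t * ((cE B (x' - σ*t) * cP0 f (x' - σ*t)) * ((g (x' - σ*t) : ℝ) : ℂ)) := by
    intro t
    funext x'
    rw [hu' x' t, hv]
    ring
  have hguv : ∀ y : ℝ, HasDerivAt (fun y => (cE B y * cP0 f y) * ((g y : ℝ) : ℂ))
      ((cE B y * cP1 B f y) * ((g y : ℝ) : ℂ)
        + (cE B y * cP0 f y) * ((deriv g y : ℝ) : ℂ)) y :=
    fun y => (cEP0' hfd y).mul ((hgd y).hasDerivAt.ofReal_comp)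
  have hDuv : ∀ x t : ℝ, deriv (fun x' => u x' t * ((v x' t : ℝ) : ℂ)) x
      = cE ω t * ((cE B (x - σ*t) * cP1 B f (x - σ*t)) * ((g (x - σ*t) : ℝ) : ℂ)
        + (cE B (x - σ*t) * cP0 f (x - σ*t)) * ((deriv g (x - σ*t) : ℝ) : ℂ)) := by
    intro x t
    rw [huvfun t]
    exact ((htrans _ _ hguv x (σ*t)).const_mul _).deriv
  -- derivative of |u|^2
  have habsfun : ∀ t : ℝ, (fun x' => ‖u x' t‖^2)
      = fun x' => (f (x' - σ*t))^2 := by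
    intro t
    funext x'
    rw [hu]
    simp [map_mul, Complex.norm_exp, Complex.mul_re, Complex.mul_im, Complex.norm_real, _root_.sq_abs]
  have hDabs : ∀ x t : ℝ, deriv (fun x' => ‖u x' t‖^2) x
      = 2 * f (x - σ*t) * deriv f (x - σ*t) := by
    intro x t
    rw [habsfun t]
    have h := ((hfd (x - σ*t)).hasDerivAt.pow 2).comp x (hsub x (σ*t))
    simpa [Function.comp_def] using h.deriv
  -- derivatives of v
  have hvxfun : ∀ t : ℝ, (fun x' => v x' t) = fun x' => g (x' - σ*t) :=
    fun t => funext fun x' => hv x' t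
  have hDvx : ∀ x t : ℝ, deriv (fun x' => v x' t) x = deriv g (x - σ*t) := by
    intro x t
    rw [hvxfun t]
    exact deriv_comp_sub_const g (σ*t) x
  have hvtfun : ∀ x : ℝ, (fun t' => v x t') = fun t' => g (x - σ*t') :=
    fun x => funext fun t' => hv x t'
  have hDvt : ∀ x t : ℝ, deriv (fun t' => v x t') t = deriv g (x - σ*t) * (-σ) := by
    intro x t
    rw [hvtfun x]
    simpa [Function.comp_def] using ((hgd (x - σ*t)).hasDerivAt.comp t (hlin x t)).deriv
  have hderiv_shift : ∀ (F : ℝ → ℝ) (s : ℝ),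
      deriv (fun x' => F (x' - s)) = fun x' => deriv F (x' - s) :=
    fun F s => funext fun x' => deriv_comp_sub_const F s x'
  have hD3v : ∀ x t : ℝ, deriv (deriv (deriv (fun x' => v x' t))) x
      = deriv (deriv (deriv g)) (x - σ*t) := by
    intro x t
    rw [hvxfun t, hderiv_shift g (σ*t), hderiv_shift (deriv g) (σ*t),
      hderiv_shift (deriv (deriv g)) (σ*t)]
  -- the key pointwise equivalence
  have key : ∀ x t : ℝ,
      ((deriv (fun t' => u x t') t + (mu0:ℂ) * deriv (fun x' => u x' t) x
        - (a1:ℂ) * deriv (fun t' => deriv (deriv (fun x' => u x' t')) x) t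
        + Complex.I * (b:ℂ) * deriv (deriv (fun x' => u x' t)) x
        = -(deriv (fun x' => u x' t * ((v x' t : ℝ) : ℂ)) x)
          - Complex.I * (mu1:ℂ) * u x t * ((v x t : ℝ) : ℂ))
      ∧ (deriv (fun t' => v x t') t + deriv (fun x' => v x' t) x
          + v x t * deriv (fun x' => v x' t) x
          + c * deriv (deriv (deriv (fun x' => v x' t))) x
        = -(1/2 : ℝ) * deriv (fun x' => ‖u x' t‖^2) x))
      ↔ ((deriv f (x-σ*t) * g (x-σ*t) + f (x-σ*t) * deriv g (x-σ*t)
            + a1*σ * deriv (deriv (deriv f)) (x-σ*t)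
            + (mu0 + 2*a1*B*ω - 3*a1*B^2*σ - σ - 2*b*B) * deriv f (x-σ*t) = 0) ∧
          ((B + mu1) * f (x-σ*t) * g (x-σ*t)
            + (3*a1*B*σ + b - a1*ω) * deriv (deriv f) (x-σ*t)
            + (ω + B*mu0 + a1*B^2*ω - a1*B^3*σ - B*σ - b*B^2) * f (x-σ*t) = 0) ∧
          (f (x-σ*t) * deriv f (x-σ*t) + g (x-σ*t) * deriv g (x-σ*t)
            + c * deriv (deriv (deriv g)) (x-σ*t) + (1 - σ) * deriv g (x-σ*t) = 0)) := by
    intro x t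
    rw [hDut x t, hDut2 x t, hI2 x t, hDuv x t, hu' x t, hv x t,
      hDvt x t, hDvx x t, hD3v x t, hDabs x t, (hDux x t).deriv]
    have hid :
        (Complex.I * ω * cE ω t * (cE B (x - σ*t) * cP0 f (x - σ*t))
          + cE ω t * (((-σ:ℝ):ℂ) * (cE B (x - σ*t) * cP1 B f (x - σ*t)))
          + (mu0:ℂ) * (cE ω t * (cE B (x - σ*t) * cP1 B f (x - σ*t)))
          - (a1:ℂ) * (Complex.I * ω * cE ω t * (cE B (x - σ*t) * cP2 B f (x - σ*t))
            + cE ω t * (((-σ:ℝ):ℂ) * (cE B (x - σ*t) * cP3 B f (x - σ*t))))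
          + Complex.I * (b:ℂ) * (cE ω t * (cE B (x - σ*t) * cP2 B f (x - σ*t))))
        - (-(cE ω t * ((cE B (x - σ*t) * cP1 B f (x - σ*t)) * ((g (x - σ*t) : ℝ) : ℂ)
            + (cE B (x - σ*t) * cP0 f (x - σ*t)) * ((deriv g (x - σ*t) : ℝ) : ℂ)))
          - Complex.I * (mu1:ℂ) * (cE ω t * (cE B (x - σ*t) * cP0 f (x - σ*t)))
            * ((g (x - σ*t) : ℝ) : ℂ))
        = cE ω t * cE B (x - σ*t) *
          (((deriv f (x-σ*t) * g (x-σ*t) + f (x-σ*t) * deriv g (x-σ*t)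
            + a1*σ * deriv (deriv (deriv f)) (x-σ*t)
            + (mu0 + 2*a1*B*ω - 3*a1*B^2*σ - σ - 2*b*B) * deriv f (x-σ*t) : ℝ) : ℂ)
          + (((B + mu1) * f (x-σ*t) * g (x-σ*t)
            + (3*a1*B*σ + b - a1*ω) * deriv (deriv f) (x-σ*t)
            + (ω + B*mu0 + a1*B^2*ω - a1*B^3*σ - B*σ - b*B^2) * f (x-σ*t) : ℝ) : ℂ)
            * Complex.I) := by
      simp only [cP0, cP1, cP2, cP3]
      push_cast
      apply Complex.ext <;>
        simp only [Complex.add_re, Complex.add_im, Complex.sub_re, Complex.sub_im,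
          Complex.mul_re, Complex.mul_im, Complex.neg_re, Complex.neg_im,
          Complex.I_re, Complex.I_im, Complex.ofReal_re, Complex.ofReal_im] <;>
        ring
    constructor
    · rintro ⟨h1, h2⟩
      have h0 := hid.symm.trans (sub_eq_zero.mpr h1)
      have hR := (mul_eq_zero.mp h0).resolve_left
        (mul_ne_zero (Complex.exp_ne_zero _) (Complex.exp_ne_zero _))
      have hre := congrArg Complex.re hR
      have him := congrArg Complex.im hR
      simp only [Complex.add_re, Complex.add_im, Complex.mul_re, Complex.mul_im,
        Complex.I_re, Complex.I_im, Complex.ofReal_re, Complex.ofReal_im,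
        Complex.zero_re, Complex.zero_im, mul_zero, mul_one, zero_mul, sub_zero,
        zero_sub, add_zero, zero_add, neg_eq_zero] at hre him
      refine ⟨hre, him, by linear_combination h2⟩
    · rintro ⟨h1, h2, h3⟩
      constructor
      · rw [← sub_eq_zero, hid, h1, h2]
        simp
      · linear_combination h3
  constructor
  · intro h ξ
    have hk := (key ξ 0).mp (h ξ 0)
    simpa using hk
  · intro h x t
    exact (key x t).mpr (h (x - σ*t))
end

section
/- Let a0, c, mu0, mu1, σ > 0 and b ∈ ℝ with 0 < a0 < 2c. Set E = 3·a0²·mu1² − 2·a0·b·mu1 − 4·a0·mu0 − b² + 4·a0 and assume E·(a0 − c) > 0. Define B = (a0·mu1 − b)/(2·a0), ω = −(a0·mu1² − b·mu1 − mu0 + σ)·mu1, λ = √(E/(16·a0·(a0 − c))), d2 = 3·√(2c − a0)·E/(8·√a0·(a0 − c)), h2 = 3·E/(8·(a0 − c)), and h0 = −(3·a0²·c·mu1² − 2·a0·b·c·mu1 + 4·a0² − 4·a0·c·mu0 − b²·c − 4·a0²·σ + 4·a0·c·σ)/(4·a0·(a0 − c)). Then f(ξ) = d2·sech²(λ·ξ)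 and g(ξ) = h0 + h2·sech²(λ·ξ) satisfy the Schrödinger KdV–KdV associated ODE system with parameters a0, c, mu0, mu1, b, wave speed σ, and phase shifts B, ω. -/
/-!
The profile `S ξ = sech² (λ ξ)` satisfies `S'' = λ² (4 S - 6 S²)`, hence `S''' = λ² (4 - 12 S) S'`.
Substituting `f = d₂ S` and `g = h₀ + h₂ S`, each equation of the system becomes `S'` or `S` times a
polynomial of degree one in `S`, so it suffices that the coefficients of these polynomials vanish:
six algebraic balance conditions on `λ, d₂, h₀, h₂, B, ω`, which the given constants satisfy.
-/

open Real

def SKdVSystem (a0 c mu0 mu1 b σ B ω : ℝ) (f g : ℝ → ℝ) : Prop :=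
  ∀ ξ : ℝ,
    (deriv f ξ * g ξ + f ξ * deriv g ξ + a0 * iteratedDeriv 3 f ξ + (mu0 - σ - 3*a0*B^2 - 2*b*B) * deriv f ξ = 0) ∧
    ((B + mu1) * f ξ * g ξ + (3*a0*B + b) * iteratedDeriv 2 f ξ + (ω + B*mu0 - B*σ - a0*B^3 - b*B^2) * f ξ = 0) ∧
    (f ξ * deriv f ξ + g ξ * deriv g ξ + c * iteratedDeriv 3 g ξ + (1 - σ) * deriv g ξ = 0)

section Profile

variable {S S' : ℝ → ℝ} {lam : ℝ}
  (hS : ∀ x, HasDerivAt S (S' x) x) (hS' : ∀ x, HasDerivAt S' (lam^2 * (4 * S x - 6 * S x^2)) x)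
include hS

theorem deriv_eq_of_eq_const_add_mul {u : ℝ → ℝ} {α β : ℝ} (hu : ∀ x, u x = α + β * S x) :
    deriv u = fun x => β * S' x := by
  have : u = fun x => α + β * S x := funext hu
  subst this
  funext x
  exact (((hS x).const_mul β).const_add α).deriv

include hS'

theorem iteratedDeriv_two_eq_of_eq_const_add_mul {u : ℝ → ℝ} {α β : ℝ}
    (hu : ∀ x, u x = α + β * S x) :
    iteratedDeriv 2 u = fun x => β * (lam^2 * (4 * S x - 6 * S x^2)) := by
  rw [iteratedDeriv_succ, iteratedDeriv_one, deriv_eq_of_eq_const_add_mul hS hu]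
  funext x
  exact ((hS' x).const_mul β).deriv

theorem iteratedDeriv_three_eq_of_eq_const_add_mul {u : ℝ → ℝ} {α β : ℝ}
    (hu : ∀ x, u x = α + β * S x) :
    iteratedDeriv 3 u = fun x => β * (lam^2 * (4 - 12 * S x) * S' x) := by
  rw [iteratedDeriv_succ, iteratedDeriv_two_eq_of_eq_const_add_mul hS hS' hu]
  funext x
  have hpoly := (((hS x).const_mul 4).sub (((hS x).fun_pow 2).const_mul 6)).const_mul (lam^2)
  refine ((hpoly.const_mul β).congr_deriv ?_).deriv
  ring

theorem sKdVSystem_of_eq_const_add_mul {a0 c mu0 mu1 b σ B ω d h0 h2 : ℝ} {f g : ℝ → ℝ}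
    (hf : ∀ x, f x = d * S x) (hg : ∀ x, g x = h0 + h2 * S x)
    (hh2 : h2 = 6 * a0 * lam^2)
    (hh0 : h0 + 4 * a0 * lam^2 + (mu0 - σ - 3*a0*B^2 - 2*b*B) = 0)
    (hB : (B + mu1) * h2 = 6 * (3*a0*B + b) * lam^2)
    (hω : (B + mu1) * h0 + 4 * (3*a0*B + b) * lam^2 + (ω + B*mu0 - B*σ - a0*B^3 - b*B^2) = 0)
    (hd : d^2 + h2^2 = 12 * c * lam^2 * h2)
    (hσ : h0 + 4 * c * lam^2 + (1 - σ) = 0) :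
    SKdVSystem a0 c mu0 mu1 b σ B ω f g := by
  have hf' : ∀ x, f x = 0 + d * S x := fun x => by rw [hf, zero_add]
  intro ξ
  rw [deriv_eq_of_eq_const_add_mul hS hf', deriv_eq_of_eq_const_add_mul hS hg,
    iteratedDeriv_two_eq_of_eq_const_add_mul hS hS' hf',
    iteratedDeriv_three_eq_of_eq_const_add_mul hS hS' hf',
    iteratedDeriv_three_eq_of_eq_const_add_mul hS hS' hg, hf, hg]
  refine ⟨?_, ?_, ?_⟩
  · linear_combination (d * S' ξ) * hh0 + (2 * d * S ξ * S' ξ) * hh2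
  · linear_combination (d * S ξ) * hω + (d * S ξ ^ 2) * hB
  · linear_combination (h2 * S' ξ) * hσ + (S ξ * S' ξ) * hd

end Profile

theorem hasDerivAt_one_div_cosh_mul_sq (lam x : ℝ) :
    HasDerivAt (fun x => (1 / cosh (lam * x))^2) (-2 * lam * sinh (lam * x) / cosh (lam * x)^3) x := by
  have hcosh := (cosh_pos (lam * x)).ne'
  have hlin := (hasDerivAt_id x).const_mul lam
  simp only [id, mul_one] at hlin
  refine (((hasDerivAt_const x 1).fun_div hlin.cosh hcosh).fun_pow 2).congr_deriv ?_
  norm_num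
  field_simp

theorem hasDerivAt_sinh_div_cosh_cube (lam x : ℝ) :
    HasDerivAt (fun x => -2 * lam * sinh (lam * x) / cosh (lam * x)^3)
      (lam^2 * (4 * (1 / cosh (lam * x))^2 - 6 * ((1 / cosh (lam * x))^2)^2)) x := by
  have hcosh := (cosh_pos (lam * x)).ne'
  have hlin := (hasDerivAt_id x).const_mul lam
  simp only [id, mul_one] at hlin
  refine ((hlin.sinh.const_mul (-2 * lam)).fun_div (hlin.cosh.fun_pow 3)
    (pow_ne_zero 3 hcosh)).congr_deriv ?_
  have hsinh : sinh (lam * x)^2 = cosh (lam * x)^2 - 1 := by linarith [cosh_sq (lam * x)]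
  field_simp
  linear_combination (6 * lam^2) * cosh (lam * x)^2 * hsinh

theorem stmt_4_general
    (a0 c mu0 mu1 b : ℝ)
    (ha0 : 0 < a0)
    (σ : ℝ) (ha0lt : a0 < 2*c)
    (E : ℝ) (hE : E = 3*a0^2*mu1^2 - 2*a0*b*mu1 - 4*a0*mu0 - b^2 + 4*a0) (hEsgn : E * (a0 - c) > 0)
    (B ω lam d2 h2 h0 : ℝ)
    (h_B : B = (a0*mu1 - b)/(2*a0))
    (h_ω : ω = -(a0*mu1^2 - b*mu1 - mu0 + σ)*mu1)
    (h_lam : lam = Real.sqrt (E/(16*a0*(a0 - c))))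
    (h_d2 : d2 = 3*Real.sqrt (2*c - a0)*E/(8*Real.sqrt a0*(a0 - c)))
    (h_h2 : h2 = 3*E/(8*(a0 - c)))
    (h_h0 : h0 = -(3*a0^2*c*mu1^2 - 2*a0*b*c*mu1 + 4*a0^2 - 4*a0*c*mu0 - b^2*c - 4*a0^2*σ + 4*a0*c*σ)/(4*a0*(a0 - c)))
    (f g : ℝ → ℝ)
    (hfdef : ∀ ξ : ℝ, f ξ = d2 * (1/Real.cosh (lam*ξ))^2)
    (hgdef : ∀ ξ : ℝ, g ξ = h0 + h2 * (1/Real.cosh (lam*ξ))^2) :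
    ∀ ξ : ℝ,
      (deriv f ξ * g ξ + f ξ * deriv g ξ + a0 * iteratedDeriv 3 f ξ + (mu0 - σ - 3*a0*B^2 - 2*b*B) * deriv f ξ = 0) ∧
      ((B + mu1) * f ξ * g ξ + (3*a0*B + b) * iteratedDeriv 2 f ξ + (ω + B*mu0 - B*σ - a0*B^3 - b*B^2) * f ξ = 0) ∧
      (f ξ * deriv f ξ + g ξ * deriv g ξ + c * iteratedDeriv 3 g ξ + (1 - σ) * deriv g ξ = 0) := by
  have hac : a0 - c ≠ 0 := by
    rintro h
    simp [h] at hEsgn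
  have hlam : lam^2 = E / (16 * a0 * (a0 - c)) := by
    rw [h_lam, sq_sqrt]
    have : E / (16 * a0 * (a0 - c)) = E * (a0 - c) / (16 * a0 * (a0 - c)^2) := by
      field_simp
    rw [this]
    exact div_nonneg hEsgn.le (by positivity)
  have hd2 : d2^2 = 9 * (2*c - a0) * E^2 / (64 * a0 * (a0 - c)^2) := by
    rw [h_d2, div_pow, mul_pow, mul_pow, mul_pow, mul_pow, sq_sqrt (by linarith), sq_sqrt ha0.le]
    ring
  subst h_B h_ω h_h2 h_h0 hE
  refine sKdVSystem_of_eq_const_add_mul (hasDerivAt_one_div_cosh_mul_sq lam)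
    (hasDerivAt_sinh_div_cosh_cube lam) hfdef hgdef ?_ ?_ ?_ ?_ ?_ ?_
  all_goals
    rw [hlam]
    try rw [hd2]
    field_simp
    ring

theorem stmt_4
    (a0 c mu0 mu1 b : ℝ)
    (ha0 : 0 < a0) (hc : 0 < c) (hmu0 : 0 < mu0) (hmu1 : 0 < mu1)
    (σ : ℝ) (hσ : 0 < σ) (ha0lt : a0 < 2*c)
    (E : ℝ) (hE : E = 3*a0^2*mu1^2 - 2*a0*b*mu1 - 4*a0*mu0 - b^2 + 4*a0) (hEsgn : E * (a0 - c) > 0)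
    (B ω lam d2 h2 h0 : ℝ)
    (h_B : B = (a0*mu1 - b)/(2*a0))
    (h_ω : ω = -(a0*mu1^2 - b*mu1 - mu0 + σ)*mu1)
    (h_lam : lam = Real.sqrt (E/(16*a0*(a0 - c))))
    (h_d2 : d2 = 3*Real.sqrt (2*c - a0)*E/(8*Real.sqrt a0*(a0 - c)))
    (h_h2 : h2 = 3*E/(8*(a0 - c)))
    (h_h0 : h0 = -(3*a0^2*c*mu1^2 - 2*a0*b*c*mu1 + 4*a0^2 - 4*a0*c*mu0 - b^2*c - 4*a0^2*σ + 4*a0*c*σ)/(4*a0*(a0 - c)))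
    (f g : ℝ → ℝ)
    (hfdef : ∀ ξ : ℝ, f ξ = d2 * (1/Real.cosh (lam*ξ))^2)
    (hgdef : ∀ ξ : ℝ, g ξ = h0 + h2 * (1/Real.cosh (lam*ξ))^2) :
    ∀ ξ : ℝ,
      (deriv f ξ * g ξ + f ξ * deriv g ξ + a0 * iteratedDeriv 3 f ξ + (mu0 - σ - 3*a0*B^2 - 2*b*B) * deriv f ξ = 0) ∧
      ((B + mu1) * f ξ * g ξ + (3*a0*B + b) * iteratedDeriv 2 f ξ + (ω + B*mu0 - B*σ - a0*B^3 - b*B^2) * f ξ = 0) ∧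
      (f ξ * deriv f ξ + g ξ * deriv g ξ + c * iteratedDeriv 3 g ξ + (1 - σ) * deriv g ξ = 0) :=
  stmt_4_general a0 c mu0 mu1 b ha0 σ ha0lt E hE hEsgn B ω lam d2 h2 h0 h_B h_ω h_lam h_d2 h_h2 h_h0
    f g hfdef hgdef
end

section
/- Let a1, c, mu0, mu1, σ > 0 and b ∈ ℝ with 0 < a1 < 2c. Set E = 4·a1³·mu1⁴·σ − 4·a1²·b·mu1³·σ − a1²·mu0²·mu1² − 4·a1²·mu0·mu1²·σ + 8·a1²·mu1²·σ + 2·a1·b·mu0·mu1 − 4·a1·b·mu1·σ − 4·a1·mu0·σ + 4·a1·σ − b², and assume E·(c − a1) > 0. Define B = (a1·mu0·mu1 − b)/(2·a1·σ·(a1·mu1² + 1)), ω = −((a1·mu1²·σ − b·mu1 − mu0 + σ)·mu1)/(a1·mu1² + 1), λ = √(E/(−16·a1·σ²·(a1 − c)·(a1·mu1² + 1)²)), d0 = √(a1·(2c − a1))·E/(4·a1·σ·(a1·mu1² + 1)²·(a1 − c)), d2 = −3·√(a1·(2c − a1))·E/(8·a1·σ·(a1·mu1² + 1)²·(a1 −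 c)), h2 = −3·E/(8·σ·(a1·mu1² + 1)²·(a1 − c)), and h0 = (4·a1⁴·mu1⁴·σ² − 4·a1³·c·mu1⁴·σ² − 4·a1³·b·mu1³·σ + 4·a1²·b·c·mu1³·σ − a1³·mu0²·mu1² − 4·a1³·mu0·mu1²·σ + 8·a1³·mu1²·σ² + a1²·c·mu0²·mu1² + 4·a1²·c·mu0·mu1²·σ − 8·a1²·c·mu1²·σ² + 2·a1²·b·mu0·mu1 − 4·a1²·b·mu1·σ − 2·a1·b·c·mu0·mu1 + 4·a1·b·c·mu1·σ − 4·a1²·mu0·σ + 4·a1²·σ² + 4·a1·c·mu0·σ − 4·a1·c·σ² − a1·b² + b²·c)/(4·a1·σ·(a1·mu1² + 1)²·(a1 − c)). Then f(ξ) = d0 + d2·sech²(λ·ξ) and g(ξ) = h0 + h2·sech²(λ·ξ) satisfy the Schrödinger BBM–BBM associated ODE system with parameters a1, c, mu0, mu1, b, wave speed σ, and phase shifts B, ω. -/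
/-!
The profile `u = sech² (λ ξ)` satisfies `u' = -2 λ tanh (λ ξ) u`, `u'' = λ² (4 u - 6 u²)` and
`u''' = λ² (4 - 12 u) u'`. Substituting `f = d0 + d2 u`, `g = h0 + h2 u` therefore turns equation (ii)
into a quadratic polynomial in `u`, and (i), (iii) into `u'` times linear polynomials in `u`. All of their
coefficients vanish once `h2 = 6 a1 σ λ²`, `3 d0 = -2 d2`, `a1 d2² = (2c - a1) h2²` and four further
relations among `B`, `ω`, `h0`, `σ` hold, and the explicit parameters satisfy these relations.
-/

open Real

noncomputable def sechSq (L x : ℝ) : ℝ := (1 / cosh (L * x)) ^ 2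

lemma hasDerivAt_cosh_mul (L x : ℝ) : HasDerivAt (fun ξ => cosh (L * ξ)) (sinh (L * x) * L) x := by
  simpa using ((hasDerivAt_id' x).const_mul L).cosh

lemma hasDerivAt_sinh_mul (L x : ℝ) : HasDerivAt (fun ξ => sinh (L * ξ)) (cosh (L * x) * L) x := by
  simpa using ((hasDerivAt_id' x).const_mul L).sinh

lemma hasDerivAt_sechSq (L x : ℝ) :
    HasDerivAt (sechSq L) (-2 * L * tanh (L * x) * sechSq L x) x := by
  have hc := (cosh_pos (L * x)).ne'
  have h : HasDerivAt (fun ξ => (cosh (L * ξ))⁻¹ ^ 2) _ x :=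
    ((hasDerivAt_cosh_mul L x).fun_inv hc).fun_pow 2
  have he : sechSq L = fun ξ => (cosh (L * ξ))⁻¹ ^ 2 := by
    funext ξ
    rw [sechSq, one_div]
  rw [he]
  refine h.congr_deriv ?_
  rw [tanh_eq_sinh_div_cosh]
  norm_num
  field_simp

lemma hasDerivAt_tanh_mul_sechSq (L x : ℝ) :
    HasDerivAt (fun ξ => tanh (L * ξ) * sechSq L ξ)
      (L * (3 * sechSq L x ^ 2 - 2 * sechSq L x)) x := by
  have hc := (cosh_pos (L * x)).ne'
  have h : HasDerivAt (fun ξ => sinh (L * ξ) / cosh (L * ξ) ^ 3) _ x :=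
    (hasDerivAt_sinh_mul L x).fun_div ((hasDerivAt_cosh_mul L x).fun_pow 3) (pow_ne_zero 3 hc)
  have he : (fun ξ => tanh (L * ξ) * sechSq L ξ) = fun ξ => sinh (L * ξ) / cosh (L * ξ) ^ 3 := by
    funext ξ
    have := (cosh_pos (L * ξ)).ne'
    rw [sechSq, tanh_eq_sinh_div_cosh]
    field_simp
  rw [he]
  refine h.congr_deriv ?_
  have := cosh_sq_sub_sinh_sq (L * x)
  simp only [sechSq]
  field_simp
  linear_combination 3 * L * cosh (L * x) ^ 2 * this

section Profile

variable (p q L x : ℝ)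

lemma deriv_sechSq_profile :
    deriv (fun ξ => p + q * sechSq L ξ) x = q * (-2 * L * tanh (L * x) * sechSq L x) :=
  (((hasDerivAt_sechSq L x).const_mul q).const_add p).deriv

lemma iteratedDeriv_two_sechSq_profile :
    iteratedDeriv 2 (fun ξ => p + q * sechSq L ξ) x =
      q * L ^ 2 * (4 * sechSq L x - 6 * sechSq L x ^ 2) := by
  have h : HasDerivAt (fun ξ => q * (-2 * L * tanh (L * ξ) * sechSq L ξ)) _ x :=
    (hasDerivAt_tanh_mul_sechSq L x).const_mul (-2 * L * q) |>.congr_of_eventuallyEq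
      (.of_forall fun ξ => by ring)
  rw [iteratedDeriv_succ, iteratedDeriv_one, funext (deriv_sechSq_profile p q L), h.deriv]
  ring

lemma iteratedDeriv_three_sechSq_profile :
    iteratedDeriv 3 (fun ξ => p + q * sechSq L ξ) x =
      q * L ^ 2 * (4 - 12 * sechSq L x) * (-2 * L * tanh (L * x) * sechSq L x) := by
  rw [iteratedDeriv_succ, funext (iteratedDeriv_two_sechSq_profile p q L)]
  have h := hasDerivAt_sechSq L x
  have h' : HasDerivAt (fun ξ => q * L ^ 2 * (4 * sechSq L ξ - 6 * sechSq L ξ ^ 2)) _ x :=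
    ((h.const_mul 4).fun_sub ((h.fun_pow 2).const_mul 6)).const_mul (q * L ^ 2)
  rw [h'.deriv]
  norm_num
  ring

end Profile

def SchrodingerBBMSystem (a1 c mu0 mu1 b σ B ω : ℝ) (f g : ℝ → ℝ) : Prop :=
  ∀ ξ : ℝ,
    (deriv f ξ * g ξ + f ξ * deriv g ξ + a1*σ * iteratedDeriv 3 f ξ
      + (mu0 + 2*a1*B*ω - 3*a1*B^2*σ - σ - 2*b*B) * deriv f ξ = 0) ∧
    ((B + mu1) * f ξ * g ξ + (3*a1*B*σ + b - a1*ω) * iteratedDeriv 2 f ξ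
      + (ω + B*mu0 + a1*B^2*ω - a1*B^3*σ - B*σ - b*B^2) * f ξ = 0) ∧
    (f ξ * deriv f ξ + g ξ * deriv g ξ + (c*σ) * iteratedDeriv 3 g ξ + (1 - σ) * deriv g ξ = 0)

theorem schrodingerBBMSystem_sechSq {a1 c mu0 mu1 b σ B ω L d0 d2 h0 h2 : ℝ} (ha1 : a1 ≠ 0)
    (hh2 : h2 = 6 * a1 * σ * L ^ 2) (hd0 : 3 * d0 = -2 * d2)
    (hd2 : a1 * d2 ^ 2 = (2 * c - a1) * h2 ^ 2)
    (hB : 3*a1*B*σ + b - a1*ω = (B + mu1) * a1 * σ)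
    (hω : (B + mu1) * h0 + (ω + B*mu0 + a1*B^2*ω - a1*B^3*σ - B*σ - b*B^2) = 0)
    (hh0 : h0 + (mu0 + 2*a1*B*ω - 3*a1*B^2*σ - σ - 2*b*B) = 0)
    (hσ : 2 * (c - a1) * h2 = 3 * a1 * (h0 + 1 - σ)) :
    SchrodingerBBMSystem a1 c mu0 mu1 b σ B ω
      (fun ξ => d0 + d2 * sechSq L ξ) (fun ξ => h0 + h2 * sechSq L ξ) := by
  intro ξ
  simp only [deriv_sechSq_profile, iteratedDeriv_two_sechSq_profile,
    iteratedDeriv_three_sechSq_profile]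
  set u := sechSq L ξ
  set u' := -2 * L * tanh (L * ξ) * u
  refine ⟨?_, ?_, ?_⟩
  · linear_combination u' * (d2 * hh0 + h2 / 3 * hd0 + (2 * u - 2 / 3) * d2 * hh2)
  · linear_combination (d0 + d2 * u) * hω + u * (B + mu1) * h2 / 3 * hd0
      + (4 * u - 6 * u ^ 2) * d2 * L ^ 2 * hB + (u ^ 2 - 2 * u / 3) * (B + mu1) * d2 * hh2
  · -- `hh2` and `hd2` only pin down `a1` times the coefficients of (iii)
    refine mul_left_cancel₀ ha1 ?_
    linear_combination u' * (a1 * d2 / 3 * hd0 - 2 / 3 * hd2 - 2 / 3 * c * h2 * hh2 - h2 / 3 * hσ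
      + u * (hd2 + 2 * c * h2 * hh2))

theorem stmt_6_general
    (a1 c mu0 mu1 b : ℝ)
    (ha1 : 0 < a1)
    (σ : ℝ) (hσ : 0 < σ) (ha1lt : a1 < 2*c)
    (E : ℝ) (hE : E = 4*a1^3*mu1^4*σ - 4*a1^2*b*mu1^3*σ - a1^2*mu0^2*mu1^2 - 4*a1^2*mu0*mu1^2*σ + 8*a1^2*mu1^2*σ + 2*a1*b*mu0*mu1 - 4*a1*b*mu1*σ - 4*a1*mu0*σ + 4*a1*σ - b^2) (hEsgn : E * (c - a1) > 0)
    (B ω lam d0 d2 h2 h0 : ℝ)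
    (h_B : B = (a1*mu0*mu1 - b)/(2*a1*σ*(a1*mu1^2 + 1)))
    (h_ω : ω = -((a1*mu1^2*σ - b*mu1 - mu0 + σ)*mu1)/(a1*mu1^2 + 1))
    (h_lam : lam = Real.sqrt (E/(-16*a1*σ^2*(a1 - c)*(a1*mu1^2 + 1)^2)))
    (h_d0 : d0 = Real.sqrt (a1*(2*c - a1))*E/(4*a1*σ*(a1*mu1^2 + 1)^2*(a1 - c)))
    (h_d2 : d2 = -3*Real.sqrt (a1*(2*c - a1))*E/(8*a1*σ*(a1*mu1^2 + 1)^2*(a1 - c)))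
    (h_h2 : h2 = -3*E/(8*σ*(a1*mu1^2 + 1)^2*(a1 - c)))
    (h_h0 : h0 = (4*a1^4*mu1^4*σ^2 - 4*a1^3*c*mu1^4*σ^2 - 4*a1^3*b*mu1^3*σ + 4*a1^2*b*c*mu1^3*σ - a1^3*mu0^2*mu1^2 - 4*a1^3*mu0*mu1^2*σ + 8*a1^3*mu1^2*σ^2 + a1^2*c*mu0^2*mu1^2 + 4*a1^2*c*mu0*mu1^2*σ - 8*a1^2*c*mu1^2*σ^2 + 2*a1^2*b*mu0*mu1 - 4*a1^2*b*mu1*σ - 2*a1*b*c*mu0*mu1 + 4*a1*b*c*mu1*σ - 4*a1^2*mu0*σ + 4*a1^2*σ^2 + 4*a1*c*mu0*σ - 4*a1*c*σ^2 - a1*b^2 + b^2*c)/(4*a1*σ*(a1*mu1^2 + 1)^2*(a1 - c)))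
    (f g : ℝ → ℝ)
    (hfdef : ∀ ξ : ℝ, f ξ = d0 + d2 * (1/Real.cosh (lam*ξ))^2)
    (hgdef : ∀ ξ : ℝ, g ξ = h0 + h2 * (1/Real.cosh (lam*ξ))^2) :
    ∀ ξ : ℝ,
      (deriv f ξ * g ξ + f ξ * deriv g ξ + a1*σ * iteratedDeriv 3 f ξ + (mu0 + 2*a1*B*ω - 3*a1*B^2*σ - σ - 2*b*B) * deriv f ξ = 0) ∧
      ((B + mu1) * f ξ * g ξ + (3*a1*B*σ + b - a1*ω) * iteratedDeriv 2 f ξ + (ω + B*mu0 + a1*B^2*ω - a1*B^3*σ - B*σ - b*B^2) * f ξ = 0) ∧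
      (f ξ * deriv f ξ + g ξ * deriv g ξ + (c*σ) * iteratedDeriv 3 g ξ + (1 - σ) * deriv g ξ = 0) := by
  have hA : a1 * mu1 ^ 2 + 1 ≠ 0 := by positivity
  have hac : a1 - c ≠ 0 := fun h => by simp [show c = a1 by linarith] at hEsgn
  have hlam : lam ^ 2 = E / (-16*a1*σ^2*(a1 - c)*(a1*mu1^2 + 1)^2) := by
    refine h_lam ▸ Real.sq_sqrt ?_
    have : E / (-16*a1*σ^2*(a1 - c)*(a1*mu1^2 + 1)^2)
        = E * (c - a1) / (16*a1*σ^2*(a1*mu1^2 + 1)^2*(a1 - c)^2) := by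
      field_simp
      ring
    exact this ▸ div_nonneg hEsgn.le (by positivity)
  obtain rfl : f = fun ξ => d0 + d2 * sechSq lam ξ := funext hfdef
  obtain rfl : g = fun ξ => h0 + h2 * sechSq lam ξ := funext hgdef
  refine schrodingerBBMSystem_sechSq ha1.ne' ?_ ?_ ?_ ?_ ?_ ?_ ?_
  · rw [h_h2, hlam]; field_simp; ring
  · rw [h_d0, h_d2]; field_simp; ring
  · rw [h_d2, h_h2]; field_simp; rw [Real.sq_sqrt (by nlinarith)]
  · rw [h_B, h_ω]; field_simp; ring
  · rw [h_h0, h_B, h_ω]; field_simp; ring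
  · rw [h_h0, h_B, h_ω]; field_simp; ring
  · rw [h_h2, h_h0, hE]; field_simp; ring

theorem stmt_6
    (a1 c mu0 mu1 b : ℝ)
    (ha1 : 0 < a1) (hc : 0 < c) (hmu0 : 0 < mu0) (hmu1 : 0 < mu1)
    (σ : ℝ) (hσ : 0 < σ) (ha1lt : a1 < 2*c)
    (E : ℝ) (hE : E = 4*a1^3*mu1^4*σ - 4*a1^2*b*mu1^3*σ - a1^2*mu0^2*mu1^2 - 4*a1^2*mu0*mu1^2*σ + 8*a1^2*mu1^2*σ + 2*a1*b*mu0*mu1 - 4*a1*b*mu1*σ - 4*a1*mu0*σ + 4*a1*σ - b^2) (hEsgn : E * (c - a1) > 0)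
    (B ω lam d0 d2 h2 h0 : ℝ)
    (h_B : B = (a1*mu0*mu1 - b)/(2*a1*σ*(a1*mu1^2 + 1)))
    (h_ω : ω = -((a1*mu1^2*σ - b*mu1 - mu0 + σ)*mu1)/(a1*mu1^2 + 1))
    (h_lam : lam = Real.sqrt (E/(-16*a1*σ^2*(a1 - c)*(a1*mu1^2 + 1)^2)))
    (h_d0 : d0 = Real.sqrt (a1*(2*c - a1))*E/(4*a1*σ*(a1*mu1^2 + 1)^2*(a1 - c)))
    (h_d2 : d2 = -3*Real.sqrt (a1*(2*c - a1))*E/(8*a1*σ*(a1*mu1^2 + 1)^2*(a1 - c)))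
    (h_h2 : h2 = -3*E/(8*σ*(a1*mu1^2 + 1)^2*(a1 - c)))
    (h_h0 : h0 = (4*a1^4*mu1^4*σ^2 - 4*a1^3*c*mu1^4*σ^2 - 4*a1^3*b*mu1^3*σ + 4*a1^2*b*c*mu1^3*σ - a1^3*mu0^2*mu1^2 - 4*a1^3*mu0*mu1^2*σ + 8*a1^3*mu1^2*σ^2 + a1^2*c*mu0^2*mu1^2 + 4*a1^2*c*mu0*mu1^2*σ - 8*a1^2*c*mu1^2*σ^2 + 2*a1^2*b*mu0*mu1 - 4*a1^2*b*mu1*σ - 2*a1*b*c*mu0*mu1 + 4*a1*b*c*mu1*σ - 4*a1^2*mu0*σ + 4*a1^2*σ^2 + 4*a1*c*mu0*σ - 4*a1*c*σ^2 - a1*b^2 + b^2*c)/(4*a1*σ*(a1*mu1^2 + 1)^2*(a1 - c)))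
    (f g : ℝ → ℝ)
    (hfdef : ∀ ξ : ℝ, f ξ = d0 + d2 * (1/Real.cosh (lam*ξ))^2)
    (hgdef : ∀ ξ : ℝ, g ξ = h0 + h2 * (1/Real.cosh (lam*ξ))^2) :
    ∀ ξ : ℝ,
      (deriv f ξ * g ξ + f ξ * deriv g ξ + a1*σ * iteratedDeriv 3 f ξ + (mu0 + 2*a1*B*ω - 3*a1*B^2*σ - σ - 2*b*B) * deriv f ξ = 0) ∧
      ((B + mu1) * f ξ * g ξ + (3*a1*B*σ + b - a1*ω) * iteratedDeriv 2 f ξ + (ω + B*mu0 + a1*B^2*ω - a1*B^3*σ - B*σ - b*B^2) * f ξ = 0) ∧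
      (f ξ * deriv f ξ + g ξ * deriv g ξ + (c*σ) * iteratedDeriv 3 g ξ + (1 - σ) * deriv g ξ = 0) :=
  stmt_6_general a1 c mu0 mu1 b ha1 σ hσ ha1lt E hE hEsgn B ω lam d0 d2 h2 h0 h_B h_ω h_lam h_d0
    h_d2 h_h2 h_h0 f g hfdef hgdef
end
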